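/- arXiv:2402.14761 — 2 statements merged into one kernel-verified Lean document; each statement's English description precedes it below -/
import Mathlib

section
/- Let b ≥ 2 and α ≠ β digits in base b. Then the sum K₀ of reciprocals of positive integers whose base-b representation has no occurrence of αβ satisfies K₀ = Σ_{n=1}^{b-1} 1/n + Σ_{b ≤ n̄ < b², n̄ ≠ αb+β} U(n̄) − Σ_{n₁=1}^{b-1} U(n₁b² + αb + β), where U(n) = Σ_{m: leading digits of m form n, trailing part avoids αβ} 1/m. -/
/-- The base-`b` digits of `n`, leading digit first. -/
def digitsBE (b n : ℕ) : List ℕ := (Nat.digits b n).reverse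

/-- `m`'s leading digits form `n` and the trailing digit string avoids `αβ`. -/
def KeptU (b α β n m : ℕ) : Prop :=
  ∃ t : List ℕ, digitsBE b m = digitsBE b n ++ t ∧ ¬ [α, β] <:+: t

noncomputable def U (b α β n : ℕ) : ℝ :=
  ∑' m : {m : ℕ // KeptU b α β n m}, (1 : ℝ) / (m : ℕ)

/-- The Kempner-type sum of `1/m` over positive integers `m` whose base-`b`
representation has no contiguous occurrence of `αβ`. -/
noncomputable def K0 (b α β : ℕ) : ℝ :=
  ∑' m : {m : ℕ // 0 < m ∧ ¬ [α, β] <:+: digitsBE b m}, (1 : ℝ) / (m : ℕ)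

section Digits
variable {b : ℕ}

lemma digitsBE_inj (hb : 2 ≤ b) {m m' : ℕ} (h : digitsBE b m = digitsBE b m') : m = m' := by
  have := List.reverse_injective h
  have h2 := Nat.ofDigits_digits b m
  rw [this, Nat.ofDigits_digits] at h2
  omega

lemma digitsBE_lt (hb : 2 ≤ b) {m d : ℕ} (hd : d ∈ digitsBE b m) : d < b :=
  Nat.digits_lt_base hb (List.mem_reverse.mp hd)

lemma digitsBE_ne_nil {m : ℕ} (hm : 0 < m) : digitsBE b m ≠ [] := by
  simp [digitsBE, Nat.digits_ne_nil_iff_ne_zero, hm.ne']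

lemma digitsBE_lower (hb : 2 ≤ b) {m k : ℕ} (h : (digitsBE b m).length = k + 1) :
    b ^ k ≤ m := by
  have hm : m ≠ 0 := by
    rintro rfl; simp [digitsBE] at h
  have h1 := Nat.base_pow_length_digits_le b m (by omega) hm
  have hl : (Nat.digits b m).length = k + 1 := by
    simpa [digitsBE] using h
  rw [hl, pow_succ'] at h1
  exact Nat.le_of_mul_le_mul_left h1 (by omega)

lemma digitsBE_upper (hb : 2 ≤ b) (m : ℕ) : m < b ^ (digitsBE b m).length := by
  have := Nat.lt_base_pow_length_digits (b := b) (m := m) (by omega)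
  simpa [digitsBE] using this

lemma digitsBE_single (hb : 2 ≤ b) {m : ℕ} (h1 : 0 < m) (h2 : m < b) :
    digitsBE b m = [m] := by
  simp [digitsBE, Nat.digits_of_lt b m h1.ne' h2]

lemma digitsBE_two (hb : 2 ≤ b) {n : ℕ} (h1 : b ≤ n) (h2 : n < b ^ 2) :
    digitsBE b n = [n / b, n % b] := by
  have hn : 0 < n := by omega
  have hd : Nat.digits b n = n % b :: Nat.digits b (n / b) := Nat.digits_def' (by omega) hn
  have hq1 : 0 < n / b := Nat.div_pos h1 (by omega)
  have hq2 : n / b < b := by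
    rw [Nat.div_lt_iff_lt_mul (by omega)]
    calc n < b ^ 2 := h2
    _ = b * b := by ring
  rw [digitsBE, hd, Nat.digits_of_lt b (n / b) hq1.ne' hq2]
  simp

lemma digitsBE_three (hb : 2 ≤ b) {α β n₁ : ℕ} (hα : α < b) (hβ : β < b)
    (h1 : 1 ≤ n₁) (h2 : n₁ < b) :
    digitsBE b (n₁ * b ^ 2 + α * b + β) = [n₁, α, β] := by
  have hN : n₁ * b ^ 2 + α * b + β = ((n₁ * b + α) * b + β) := by ring
  have hmod : (n₁ * b ^ 2 + α * b + β) % b = β := by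
    rw [hN, mul_comm (n₁ * b + α) b, Nat.mul_add_mod, Nat.mod_eq_of_lt hβ]
  have hdiv : (n₁ * b ^ 2 + α * b + β) / b = n₁ * b + α := by
    rw [hN, mul_comm (n₁ * b + α) b, Nat.mul_add_div (by omega), Nat.div_eq_of_lt hβ, add_zero]
  have hpos : 0 < n₁ * b ^ 2 + α * b + β := by
    have : 0 < n₁ * b ^ 2 := by positivity
    omega
  have hd : Nat.digits b (n₁ * b ^ 2 + α * b + β)
      = β :: Nat.digits b (n₁ * b + α) := by
    rw [Nat.digits_def' (by omega : 1 < b) hpos, hmod, hdiv]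
  have h2d : digitsBE b (n₁ * b + α) = [(n₁ * b + α) / b, (n₁ * b + α) % b] :=
    digitsBE_two hb (by nlinarith) (by nlinarith [sq_nonneg b])
  have hq : (n₁ * b + α) / b = n₁ := by
    rw [mul_comm n₁ b, Nat.mul_add_div (by omega), Nat.div_eq_of_lt hα, add_zero]
  have hr : (n₁ * b + α) % b = α := by
    rw [mul_comm n₁ b, Nat.mul_add_mod, Nat.mod_eq_of_lt hα]
  rw [digitsBE, hd]
  have := congrArg List.reverse h2d
  simp only [digitsBE] at this
  simp only [List.reverse_cons, List.reverse_reverse] at this ⊢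
  rw [this, hq, hr]
  simp

lemma digitsBE_head_ne_zero (hb : 2 ≤ b) {m d : ℕ} {l : List ℕ}
    (h : digitsBE b m = d :: l) : d ≠ 0 := by
  have hm : m ≠ 0 := by
    rintro rfl; simp [digitsBE] at h
  have hlast := Nat.getLast_digit_ne_zero b hm
  have hne : Nat.digits b m ≠ [] := Nat.digits_ne_nil_iff_ne_zero.mpr hm
  have : (digitsBE b m).head? = some d := by rw [h]; rfl
  rw [digitsBE, List.head?_reverse] at this
  rw [List.getLast?_eq_getLast hne] at this
  simp only [Option.some.injEq] at this
  rw [← this]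
  exact hlast

lemma two_digit_inj {d₁ d₂ x y : ℕ} (hd₂ : d₂ < b) (hy : y < b)
    (h : d₁ * b + d₂ = x * b + y) : d₁ = x ∧ d₂ = y := by
  have h1 : (d₁ * b + d₂) % b = (x * b + y) % b := by rw [h]
  rw [mul_comm d₁ b, mul_comm x b, Nat.mul_add_mod, Nat.mul_add_mod, Nat.mod_eq_of_lt hd₂, Nat.mod_eq_of_lt hy] at h1
  subst h1
  constructor
  · have hb0 : 0 < b := by omega
    nlinarith
  · rfl

end Digits
section Infix
variable {α β : ℕ}

lemma singleton_prefix_iff {l : List ℕ} : [β] <+: l ↔ ∃ l', l = β :: l' := by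
  constructor
  · rintro ⟨t, rfl⟩; exact ⟨t, rfl⟩
  · rintro ⟨l', rfl⟩; exact ⟨l', rfl⟩

lemma pair_prefix_iff {x : ℕ} {l : List ℕ} :
    [α, β] <+: x :: l ↔ α = x ∧ [β] <+: l := by
  rw [show ([α, β] : List ℕ) = α :: [β] from rfl, List.cons_prefix_cons]

lemma pair_infix_cons_iff {x : ℕ} {l : List ℕ} :
    [α, β] <:+: x :: l ↔ (α = x ∧ [β] <+: l) ∨ [α, β] <:+: l := by
  rw [List.infix_cons_iff, pair_prefix_iff]

lemma pair_not_infix_short {l : List ℕ} (h : l.length ≤ 1) : ¬ [α, β] <:+: l := by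
  intro hinf
  have := hinf.length_le
  simp at this
  omega

lemma pair_infix_cons_of_ne {l : List ℕ} (hne : α ≠ β) :
    [α, β] <:+: β :: l ↔ [α, β] <:+: l := by
  rw [pair_infix_cons_iff]
  simp [hne]

end Infix

open scoped ENNReal

noncomputable def ee (m : ℕ) : ℝ≥0∞ := (m : ℝ≥0∞)⁻¹

def Aset (b α β : ℕ) : Set ℕ := {m | 0 < m ∧ ¬ [α, β] <:+: digitsBE b m}

def Bset (b α β n : ℕ) : Set ℕ := {m | KeptU b α β n m}

section Mem
variable {b α β : ℕ}

lemma digitsBE_len_ge_two (hb : 2 ≤ b) {m : ℕ} (hm : b ≤ m) :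
    2 ≤ (digitsBE b m).length := by
  by_contra h
  push_neg at h
  have hup := digitsBE_upper hb m
  have : b ^ (digitsBE b m).length ≤ b ^ 1 := Nat.pow_le_pow_right (by omega) (by omega)
  simp at this
  omega

lemma digitsBE_len_le_one (hb : 2 ≤ b) {m : ℕ} (hm : m < b) :
    (digitsBE b m).length ≤ 1 := by
  by_contra h
  push_neg at h
  obtain ⟨k, hk⟩ : ∃ k, (digitsBE b m).length = k + 1 := ⟨_, (Nat.succ_pred_eq_of_pos (by omega)).symm⟩
  have hlow := digitsBE_lower hb hk
  have : b ^ 1 ≤ b ^ k := Nat.pow_le_pow_right (by omega) (by omega)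
  simp at this
  omega

lemma not_mem_Bset_of_lt (hb : 2 ≤ b) {n m : ℕ} (hn : b ≤ n) (hm : m < b) :
    m ∉ Bset b α β n := by
  rintro ⟨t, ht, -⟩
  have h1 := digitsBE_len_ge_two hb hn
  have h2 := digitsBE_len_le_one hb hm
  have := congrArg List.length ht
  simp at this
  omega

lemma mem_Bset_two (hb : 2 ≤ b) {n m d₁ d₂ : ℕ} {t : List ℕ}
    (hn1 : b ≤ n) (hn2 : n < b ^ 2) (hE : digitsBE b m = d₁ :: d₂ :: t) :
    m ∈ Bset b α β n ↔ n = d₁ * b + d₂ ∧ ¬ [α, β] <:+: t := by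
  have hD := digitsBE_two hb hn1 hn2
  constructor
  · rintro ⟨t', ht', hav⟩
    rw [hE, hD] at ht'
    simp only [List.cons_append, List.nil_append, List.cons.injEq] at ht'
    obtain ⟨h1, h2, h3⟩ := ht'
    subst h3
    refine ⟨?_, hav⟩
    rw [h1, h2, Nat.div_add_mod' n b]
  · rintro ⟨rfl, hav⟩
    have hd₂ : d₂ < b := digitsBE_lt hb (by rw [hE]; simp)
    have hq : (d₁ * b + d₂) / b = d₁ := by
      rw [mul_comm d₁ b, Nat.mul_add_div (by omega), Nat.div_eq_of_lt hd₂, add_zero]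
    have hr : (d₁ * b + d₂) % b = d₂ := by
      rw [mul_comm d₁ b, Nat.mul_add_mod, Nat.mod_eq_of_lt hd₂]
    exact ⟨t, by rw [hE, hD, hq, hr]; rfl, hav⟩

lemma mem_Bset_three (hb : 2 ≤ b) {n₁ m d₁ d₂ : ℕ} {t : List ℕ}
    (hα : α < b) (hβ : β < b) (h1 : 1 ≤ n₁) (h2 : n₁ < b)
    (hE : digitsBE b m = d₁ :: d₂ :: t) :
    m ∈ Bset b α β (n₁ * b ^ 2 + α * b + β) ↔
      n₁ = d₁ ∧ α = d₂ ∧ ∃ t', t = β :: t' ∧ ¬ [α, β] <:+: t' := by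
  have hD := digitsBE_three hb hα hβ h1 h2
  constructor
  · rintro ⟨t', ht', hav⟩
    rw [hE, hD] at ht'
    simp only [List.cons_append, List.nil_append, List.cons.injEq] at ht'
    obtain ⟨h1', h2', h3'⟩ := ht'
    exact ⟨h1'.symm, h2'.symm, t', h3', hav⟩
  · rintro ⟨rfl, rfl, t', rfl, hav⟩
    exact ⟨t', by rw [hE, hD]; rfl, hav⟩

end Mem

section Pointwise
variable {b α β : ℕ}

lemma pointwise (hb : 2 ≤ b) (hα : α < b) (hβ : β < b) (hαβ : α ≠ β) (m : ℕ) :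
    (Aset b α β).indicator ee m
      + ∑ n₁ ∈ Finset.Icc 1 (b - 1), (Bset b α β (n₁ * b ^ 2 + α * b + β)).indicator ee m
    = (↑(Finset.Icc 1 (b - 1)) : Set ℕ).indicator ee m
      + ∑ n ∈ (Finset.Ico b (b ^ 2)).erase (α * b + β), (Bset b α β n).indicator ee m := by
  rcases lt_or_ge m b with hmb | hmb
  · -- small m
    have hB3 : ∑ n₁ ∈ Finset.Icc 1 (b - 1),
        (Bset b α β (n₁ * b ^ 2 + α * b + β)).indicator ee m = 0 := by
      apply Finset.sum_eq_zero
      intro n₁ hn₁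
      rw [Finset.mem_Icc] at hn₁
      apply Set.indicator_of_notMem
      apply not_mem_Bset_of_lt hb _ hmb
      have : 1 * b ≤ n₁ * b ^ 2 := by nlinarith
      omega
    have hB : ∑ n ∈ (Finset.Ico b (b ^ 2)).erase (α * b + β),
        (Bset b α β n).indicator ee m = 0 := by
      apply Finset.sum_eq_zero
      intro n hn
      rw [Finset.mem_erase, Finset.mem_Ico] at hn
      exact Set.indicator_of_notMem (not_mem_Bset_of_lt hb hn.2.1 hmb) _
    rw [hB3, hB]
    rcases Nat.eq_zero_or_pos m with rfl | hm0
    · rw [Set.indicator_of_notMem, Set.indicator_of_notMem]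
      · simp only [Finset.coe_Icc, Set.mem_Icc]; omega
      · intro h; exact absurd h.1 (lt_irrefl 0)
    · rw [Set.indicator_of_mem, Set.indicator_of_mem]
      · simp only [Finset.coe_Icc, Set.mem_Icc]; omega
      · refine ⟨hm0, ?_⟩
        rw [digitsBE_single hb hm0 hmb]
        exact pair_not_infix_short (by simp)
  · -- b ≤ m
    obtain ⟨d₁, d₂, t, hE⟩ : ∃ d₁ d₂ t, digitsBE b m = d₁ :: d₂ :: t := by
      have h2 := digitsBE_len_ge_two hb hmb
      rcases hL : digitsBE b m with _ | ⟨x, _ | ⟨y, l⟩⟩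
      · rw [hL] at h2; simp at h2
      · rw [hL] at h2; simp at h2
      · exact ⟨x, y, l, rfl⟩
    have hd₁0 : d₁ ≠ 0 := digitsBE_head_ne_zero hb hE
    have hd₁ : d₁ < b := digitsBE_lt hb (by rw [hE]; simp)
    have hd₂ : d₂ < b := digitsBE_lt hb (by rw [hE]; simp)
    have hIcc : (↑(Finset.Icc 1 (b - 1)) : Set ℕ).indicator ee m = 0 := by
      apply Set.indicator_of_notMem
      simp only [Finset.coe_Icc, Set.mem_Icc]
      omega
    rw [hIcc, zero_add]
    by_cases hpair : d₁ = α ∧ d₂ = β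
    · -- first two digits are exactly αβ
      have hA : (Aset b α β).indicator ee m = 0 := by
        apply Set.indicator_of_notMem
        rintro ⟨-, hni⟩
        exact hni ⟨[], t, by rw [hE, hpair.1, hpair.2]; rfl⟩
      have hB3 : ∑ n₁ ∈ Finset.Icc 1 (b - 1),
          (Bset b α β (n₁ * b ^ 2 + α * b + β)).indicator ee m = 0 := by
        apply Finset.sum_eq_zero
        intro n₁ hn₁
        rw [Finset.mem_Icc] at hn₁
        apply Set.indicator_of_notMem
        intro hmem
        rw [mem_Bset_three hb hα hβ (by omega) (by omega) hE] at hmem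
        exact hαβ (hmem.2.1.trans hpair.2)
      have hB : ∑ n ∈ (Finset.Ico b (b ^ 2)).erase (α * b + β),
          (Bset b α β n).indicator ee m = 0 := by
        apply Finset.sum_eq_zero
        intro n hn
        rw [Finset.mem_erase, Finset.mem_Ico] at hn
        apply Set.indicator_of_notMem
        intro hmem
        rw [mem_Bset_two hb hn.2.1 hn.2.2 hE] at hmem
        exact hn.1 (by rw [hmem.1, hpair.1, hpair.2])
      rw [hA, hB3, hB, add_zero]
    · -- first two digits not αβ
      have hn₀Ico : d₁ * b + d₂ ∈ (Finset.Ico b (b ^ 2)).erase (α * b + β) := by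
        rw [Finset.mem_erase, Finset.mem_Ico]
        refine ⟨?_, ?_, ?_⟩
        · intro h
          exact hpair (two_digit_inj hd₂ hβ h)
        · nlinarith [Nat.one_le_iff_ne_zero.mpr hd₁0]
        · nlinarith
      have hBsum : ∑ n ∈ (Finset.Ico b (b ^ 2)).erase (α * b + β),
          (Bset b α β n).indicator ee m = (Bset b α β (d₁ * b + d₂)).indicator ee m := by
        apply Finset.sum_eq_single_of_mem _ hn₀Ico
        intro n hn hne
        rw [Finset.mem_erase, Finset.mem_Ico] at hn
        apply Set.indicator_of_notMem
        intro hmem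
        rw [mem_Bset_two hb hn.2.1 hn.2.2 hE] at hmem
        exact hne hmem.1
      rw [hBsum]
      have hn₀b : b ≤ d₁ * b + d₂ := by nlinarith [Nat.one_le_iff_ne_zero.mpr hd₁0]
      have hn₀b2 : d₁ * b + d₂ < b ^ 2 := by nlinarith
      by_cases hmid : d₂ = α ∧ [β] <+: t
      · obtain ⟨hd₂α, t', rfl⟩ : d₂ = α ∧ ∃ t', t = β :: t' := by
          obtain ⟨h1, h2⟩ := hmid
          exact ⟨h1, singleton_prefix_iff.mp h2⟩
        have hA : (Aset b α β).indicator ee m = 0 := by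
          apply Set.indicator_of_notMem
          rintro ⟨-, hni⟩
          exact hni ⟨[d₁], t', by rw [hE, hd₂α]; rfl⟩
        have hd₁Icc : d₁ ∈ Finset.Icc 1 (b - 1) := by
          rw [Finset.mem_Icc]; omega
        have hB3 : ∑ n₁ ∈ Finset.Icc 1 (b - 1),
            (Bset b α β (n₁ * b ^ 2 + α * b + β)).indicator ee m
            = (Bset b α β (d₁ * b ^ 2 + α * b + β)).indicator ee m := by
          apply Finset.sum_eq_single_of_mem _ hd₁Icc
          intro n₁ hn₁ hne
          rw [Finset.mem_Icc] at hn₁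
          apply Set.indicator_of_notMem
          intro hmem
          rw [mem_Bset_three hb hα hβ (by omega) (by omega) hE] at hmem
          exact hne hmem.1
        rw [hB3, hA, zero_add]
        by_cases hav : [α, β] <:+: t'
        · rw [Set.indicator_of_notMem, Set.indicator_of_notMem]
          · intro hmem
            rw [mem_Bset_two hb hn₀b hn₀b2 hE] at hmem
            rw [pair_infix_cons_of_ne hαβ] at hmem
            exact hmem.2 hav
          · intro hmem
            rw [mem_Bset_three hb hα hβ (by omega) (by omega) hE] at hmem
            obtain ⟨-, -, t'', ht'', hav''⟩ := hmem
            obtain ⟨-, rfl⟩ := List.cons.injEq .. |>.mp ht''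
            exact hav'' hav
        · rw [Set.indicator_of_mem, Set.indicator_of_mem]
          · rw [mem_Bset_two hb hn₀b hn₀b2 hE, pair_infix_cons_of_ne hαβ]
            exact ⟨rfl, hav⟩
          · rw [mem_Bset_three hb hα hβ (by omega) (by omega) hE]
            exact ⟨rfl, hd₂α.symm, t', rfl, hav⟩
      · have hB3 : ∑ n₁ ∈ Finset.Icc 1 (b - 1),
            (Bset b α β (n₁ * b ^ 2 + α * b + β)).indicator ee m = 0 := by
          apply Finset.sum_eq_zero
          intro n₁ hn₁
          rw [Finset.mem_Icc] at hn₁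
          apply Set.indicator_of_notMem
          intro hmem
          rw [mem_Bset_three hb hα hβ (by omega) (by omega) hE] at hmem
          obtain ⟨-, h2', t', rfl, -⟩ := hmem
          exact hmid ⟨h2'.symm, ⟨t', rfl⟩⟩
        rw [hB3, add_zero]
        by_cases hav : [α, β] <:+: t
        · rw [Set.indicator_of_notMem, Set.indicator_of_notMem]
          · intro hmem
            rw [mem_Bset_two hb hn₀b hn₀b2 hE] at hmem
            exact hmem.2 hav
          · rintro ⟨-, hni⟩
            apply hni
            rw [hE]
            exact pair_infix_cons_iff.mpr (Or.inr (pair_infix_cons_iff.mpr (Or.inr hav)))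
        · rw [Set.indicator_of_mem, Set.indicator_of_mem]
          · rw [mem_Bset_two hb hn₀b hn₀b2 hE]
            exact ⟨rfl, hav⟩
          · refine ⟨by omega, ?_⟩
            rw [hE]
            intro hinf
            rcases pair_infix_cons_iff.mp hinf with ⟨rfl, hpre⟩ | hinf2
            · rw [singleton_prefix_iff] at hpre
              obtain ⟨l', hl'⟩ := hpre
              obtain ⟨rfl, -⟩ := List.cons.injEq .. |>.mp hl'
              exact hpair ⟨rfl, rfl⟩
            · rcases pair_infix_cons_iff.mp hinf2 with ⟨h1, h2⟩ | hinf3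
              · exact hmid ⟨h1.symm, h2⟩
              · exact hav hinf3

end Pointwise

section Key
variable {b α β : ℕ}

lemma key_ennreal (hb : 2 ≤ b) (hα : α < b) (hβ : β < b) (hαβ : α ≠ β) :
    (∑' m : (Aset b α β), ee m)
      + ∑ n₁ ∈ Finset.Icc 1 (b - 1), ∑' m : (Bset b α β (n₁ * b ^ 2 + α * b + β)), ee m
    = (∑ n ∈ Finset.Icc 1 (b - 1), ee n)
      + ∑ n ∈ (Finset.Ico b (b ^ 2)).erase (α * b + β), ∑' m : (Bset b α β n), ee m := by
  have e1 : ∑ n₁ ∈ Finset.Icc 1 (b - 1), ∑' m : (Bset b α β (n₁ * b ^ 2 + α * b + β)), ee m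
      = ∑' m : ℕ, ∑ n₁ ∈ Finset.Icc 1 (b - 1),
          (Bset b α β (n₁ * b ^ 2 + α * b + β)).indicator ee m :=
    calc ∑ n₁ ∈ Finset.Icc 1 (b - 1), ∑' m : (Bset b α β (n₁ * b ^ 2 + α * b + β)), ee m
        = ∑ n₁ ∈ Finset.Icc 1 (b - 1),
            ∑' m : ℕ, (Bset b α β (n₁ * b ^ 2 + α * b + β)).indicator ee m :=
          Finset.sum_congr rfl fun _ _ => tsum_subtype _ _
      _ = _ := (Summable.tsum_finsetSum fun _ _ => ENNReal.summable).symm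
  have e2 : ∑ n ∈ (Finset.Ico b (b ^ 2)).erase (α * b + β), ∑' m : (Bset b α β n), ee m
      = ∑' m : ℕ, ∑ n ∈ (Finset.Ico b (b ^ 2)).erase (α * b + β),
          (Bset b α β n).indicator ee m :=
    calc ∑ n ∈ (Finset.Ico b (b ^ 2)).erase (α * b + β), ∑' m : (Bset b α β n), ee m
        = ∑ n ∈ (Finset.Ico b (b ^ 2)).erase (α * b + β),
            ∑' m : ℕ, (Bset b α β n).indicator ee m :=
          Finset.sum_congr rfl fun _ _ => tsum_subtype _ _
      _ = _ := (Summable.tsum_finsetSum fun _ _ => ENNReal.summable).symm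
  have e0 : ∑ n ∈ Finset.Icc 1 (b - 1), ee n
      = ∑' m : ℕ, (↑(Finset.Icc 1 (b - 1)) : Set ℕ).indicator ee m :=
    ((Finset.tsum_subtype _ ee).symm).trans (tsum_subtype _ _)
  rw [e0, e1, e2, tsum_subtype, ← ENNReal.tsum_add, ← ENNReal.tsum_add]
  exact tsum_congr (pointwise hb hα hβ hαβ)

end Key

section Finite
variable (b α β : ℕ)

def AVP (k : ℕ) (t : List ℕ) : Prop :=
  t.length = k ∧ (∀ d ∈ t, d < b) ∧ ¬ [α, β] <:+: t

noncomputable def nu (k : ℕ) : ℝ≥0∞ := ∑' _ : {t : List ℕ // AVP b α β k t}, (1 : ℝ≥0∞)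

variable {b α β}

lemma list_reconstruct {t : List ℕ} {k : ℕ} (h : t.length = k + 2) :
    t = t.headI :: t.tail.headI :: t.tail.tail := by
  rcases t with _ | ⟨x, _ | ⟨y, l⟩⟩ <;> simp_all

lemma nu_zero_le : nu b α β 0 ≤ 1 := by
  have hsub : Subsingleton {t : List ℕ // AVP b α β 0 t} := by
    constructor
    rintro ⟨t, ht⟩ ⟨s, hs⟩
    have h1 := List.length_eq_zero_iff.mp ht.1
    have h2 := List.length_eq_zero_iff.mp hs.1
    subst h1 h2; rfl
  have hinj : Function.Injective (fun _ : {t : List ℕ // AVP b α β 0 t} => ()) :=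
    fun a b _ => Subsingleton.elim a b
  calc nu b α β 0 ≤ ∑' _ : Unit, (1 : ℝ≥0∞) :=
        ENNReal.tsum_comp_le_tsum_of_injective hinj (fun _ => 1)
    _ = 1 := by rw [tsum_fintype]; simp

lemma nu_one_le (hb : 2 ≤ b) : nu b α β 1 ≤ b := by
  have hkey : ∀ x : {t : List ℕ // AVP b α β 1 t}, x.1.headI < b := by
    rintro ⟨t, ht⟩
    obtain ⟨a, rfl⟩ := List.length_eq_one_iff.mp ht.1
    exact ht.2.1 a (by simp)
  have hinj : Function.Injective
      (fun x : {t : List ℕ // AVP b α β 1 t} => (⟨x.1.headI, hkey x⟩ : Fin b)) := by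
    rintro ⟨t, ht⟩ ⟨s, hs⟩ h
    obtain ⟨a, rfl⟩ := List.length_eq_one_iff.mp ht.1
    obtain ⟨c, rfl⟩ := List.length_eq_one_iff.mp hs.1
    simp only [Fin.mk.injEq, List.headI] at h
    simp [h]
  calc nu b α β 1 ≤ ∑' _ : Fin b, (1 : ℝ≥0∞) :=
        ENNReal.tsum_comp_le_tsum_of_injective hinj (fun _ => 1)
    _ = b := by rw [tsum_fintype]; simp

lemma nu_step (hb : 2 ≤ b) (hα : α < b) (hβ : β < b) (k : ℕ) :
    nu b α β (k + 2) ≤ (b * b - 1 : ℕ) * nu b α β k := by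
  set D : Finset (ℕ × ℕ) := ((Finset.range b) ×ˢ (Finset.range b)).erase (α, β) with hD
  have hprops : ∀ x : {t : List ℕ // AVP b α β (k + 2) t},
      ((x.1.headI, x.1.tail.headI) ∈ D) ∧ AVP b α β k x.1.tail.tail := by
    rintro ⟨t, ht⟩
    obtain ⟨hlen, hlt, hav⟩ := ht
    show (t.headI, t.tail.headI) ∈ D ∧ AVP b α β k t.tail.tail
    have hrec := list_reconstruct hlen
    constructor
    · rw [hD, Finset.mem_erase, Finset.mem_product, Finset.mem_range, Finset.mem_range]
      refine ⟨?_, hlt _ (by rw [hrec]; simp), hlt _ (by rw [hrec]; simp)⟩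
      intro hpq
      apply hav
      rw [hrec]
      have h1 : t.headI = α := congrArg Prod.fst hpq
      have h2 : t.tail.headI = β := congrArg Prod.snd hpq
      rw [h1, h2]
      exact ⟨[], t.tail.tail, rfl⟩
    · refine ⟨?_, fun d hd => hlt d ?_, fun hinf => hav ?_⟩
      · have h1 : t.tail.tail.length = t.length - 2 := by
          simp only [List.length_tail]
          omega
        omega
      · rw [hrec]; simp [hd]
      · rw [hrec]
        exact hinf.trans ⟨[t.headI, t.tail.headI], [], by simp⟩
  have hinj : Function.Injective (fun x : {t : List ℕ // AVP b α β (k + 2) t} =>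
      ((⟨(x.1.headI, x.1.tail.headI), (hprops x).1⟩ : D),
       (⟨x.1.tail.tail, (hprops x).2⟩ : {t : List ℕ // AVP b α β k t}))) := by
    rintro ⟨t, ht⟩ ⟨s, hs⟩ h
    simp only [Prod.mk.injEq, Subtype.mk.injEq, Prod.mk.injEq] at h
    obtain ⟨⟨h1, h2⟩, h3⟩ := h
    apply Subtype.ext
    simp only
    rw [list_reconstruct ht.1, list_reconstruct hs.1, h1, h2, h3]
  have hcard : ∑' _ : D, (1 : ℝ≥0∞) = (b * b - 1 : ℕ) := by
    rw [Finset.tsum_subtype D (fun _ => (1 : ℝ≥0∞))]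
    rw [Finset.sum_const, hD, Finset.card_erase_of_mem (by simp [Finset.mem_product, hα, hβ])]
    simp [Finset.card_product, mul_comm]
  calc nu b α β (k + 2)
      ≤ ∑' p : D × {t : List ℕ // AVP b α β k t}, (1 : ℝ≥0∞) :=
        ENNReal.tsum_comp_le_tsum_of_injective hinj (fun _ => 1)
    _ = ∑' _ : D, ∑' _ : {t : List ℕ // AVP b α β k t}, (1 : ℝ≥0∞) := ENNReal.tsum_prod'
    _ = ∑' _ : D, (1 : ℝ≥0∞) * nu b α β k := by rw [← nu]; simp [ENNReal.tsum_mul_right]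
    _ = (b * b - 1 : ℕ) * nu b α β k := by
        rw [ENNReal.tsum_mul_right, hcard]

lemma nu_bound (hb : 2 ≤ b) (hα : α < b) (hβ : β < b) (k : ℕ) :
    nu b α β k ≤ (b : ℝ≥0∞) * ((b * b - 1 : ℕ) : ℝ≥0∞) ^ (k / 2) := by
  induction k using Nat.twoStepInduction with
  | zero => simpa using nu_zero_le.trans (by simp; exact_mod_cast Nat.one_le_iff_ne_zero.mpr (by omega))
  | one => simpa using nu_one_le hb
  | more k ih ih2 =>
    have hstep := nu_step hb hα hβ k
    have hdiv : (k + 2) / 2 = k / 2 + 1 := by omega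
    calc nu b α β (k + 2) ≤ (b * b - 1 : ℕ) * nu b α β k := hstep
      _ ≤ (b * b - 1 : ℕ) * ((b : ℝ≥0∞) * ((b * b - 1 : ℕ) : ℝ≥0∞) ^ (k / 2)) :=
          mul_le_mul_right ih _
      _ = (b : ℝ≥0∞) * ((b * b - 1 : ℕ) : ℝ≥0∞) ^ (k / 2 + 1) := by ring
      _ = (b : ℝ≥0∞) * ((b * b - 1 : ℕ) : ℝ≥0∞) ^ ((k + 2) / 2) := by rw [hdiv]

end Finite

section BFinite
variable {b α β : ℕ}

lemma Bset_sum_le (hb : 2 ≤ b) {n : ℕ} (hn : 0 < n) :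
    ∑' m : (Bset b α β n), ee m ≤ ∑' k : ℕ, ((b ^ k : ℕ) : ℝ≥0∞)⁻¹ * nu b α β k := by
  set L := (digitsBE b n).length with hL
  have hL1 : 1 ≤ L := by
    have hne := digitsBE_ne_nil (b := b) hn
    rw [hL]
    exact List.length_pos_iff.mpr hne
  have hkey : ∀ x : (Bset b α β n),
      digitsBE b (x : ℕ) = digitsBE b n ++ (digitsBE b (x : ℕ)).drop L ∧
      ¬ [α, β] <:+: (digitsBE b (x : ℕ)).drop L := by
    rintro ⟨m, t', ht', hav⟩
    show digitsBE b m = _ ++ (digitsBE b m).drop L ∧ ¬ _ <:+: (digitsBE b m).drop L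
    rw [ht', hL, List.drop_left]
    exact ⟨rfl, hav⟩
  have hAVP : ∀ x : (Bset b α β n),
      AVP b α β ((digitsBE b (x : ℕ)).drop L).length ((digitsBE b (x : ℕ)).drop L) :=
    fun x => ⟨rfl, fun d hd => digitsBE_lt hb (List.drop_subset _ _ hd), (hkey x).2⟩
  set g : (Σ k : ℕ, {t : List ℕ // AVP b α β k t}) → ℝ≥0∞ :=
    fun p => ((b ^ p.1 : ℕ) : ℝ≥0∞)⁻¹ with hg
  set i : (Bset b α β n) → (Σ k : ℕ, {t : List ℕ // AVP b α β k t}) :=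
    fun x => ⟨((digitsBE b (x : ℕ)).drop L).length, ⟨(digitsBE b (x : ℕ)).drop L, hAVP x⟩⟩ with hi
  have hinj : Function.Injective i := by
    rintro x y h
    have h2 := congrArg (fun p : (Σ k : ℕ, {t : List ℕ // AVP b α β k t}) => (p.2 : List ℕ)) h
    change (digitsBE b (x : ℕ)).drop L = (digitsBE b (y : ℕ)).drop L at h2
    have hx := (hkey x).1
    have hy := (hkey y).1
    have : digitsBE b (x : ℕ) = digitsBE b (y : ℕ) := by rw [hx, hy, h2]
    exact Subtype.ext (digitsBE_inj hb this)
  have hpoint : ∀ x : (Bset b α β n), ee (x : ℕ) ≤ g (i x) := by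
    intro x
    have hlen : (digitsBE b (x : ℕ)).length = L + ((digitsBE b (x : ℕ)).drop L).length := by
      conv_lhs => rw [(hkey x).1]
      simp [hL]
    set k := ((digitsBE b (x : ℕ)).drop L).length with hk
    have hlow : b ^ (L - 1 + k) ≤ (x : ℕ) := digitsBE_lower hb (by omega)
    have hpow : b ^ k ≤ b ^ (L - 1 + k) := Nat.pow_le_pow_right (by omega) (by omega)
    have hle : ((b ^ k : ℕ) : ℝ≥0∞) ≤ ((x : ℕ) : ℝ≥0∞) := by
      exact_mod_cast Nat.cast_le.mpr (le_trans hpow hlow)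
    exact ENNReal.inv_le_inv' hle
  calc ∑' x : (Bset b α β n), ee (x : ℕ)
      ≤ ∑' x : (Bset b α β n), g (i x) :=
        Summable.tsum_le_tsum hpoint ENNReal.summable ENNReal.summable
    _ ≤ ∑' p, g p := ENNReal.tsum_comp_le_tsum_of_injective hinj g
    _ = ∑' k : ℕ, ∑' t : {t : List ℕ // AVP b α β k t}, ((b ^ k : ℕ) : ℝ≥0∞)⁻¹ :=
        ENNReal.tsum_sigma' g
    _ = ∑' k : ℕ, ((b ^ k : ℕ) : ℝ≥0∞)⁻¹ * nu b α β k := by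
        refine tsum_congr fun k => ?_
        rw [nu, ← ENNReal.tsum_mul_left]
        exact tsum_congr fun _ => (mul_one _).symm

lemma total_finite (hb : 2 ≤ b) (hα : α < b) (hβ : β < b) :
    (∑' k : ℕ, ((b ^ k : ℕ) : ℝ≥0∞)⁻¹ * nu b α β k) ≠ ∞ := by
  set c : ℝ≥0∞ := ((b * b - 1 : ℕ) : ℝ≥0∞) with hc
  set r : ℝ≥0∞ := c * (((b * b : ℕ) : ℝ≥0∞))⁻¹ with hr
  have hstep : ∀ k : ℕ, ((b ^ k : ℕ) : ℝ≥0∞)⁻¹ * nu b α β k ≤ (b : ℝ≥0∞) * r ^ (k / 2) := by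
    intro k
    set j := k / 2 with hj
    have h2j : b ^ (2 * j) ≤ b ^ k := Nat.pow_le_pow_right (by omega) (by omega)
    have hrpow : r ^ j = c ^ j * (((b ^ (2 * j) : ℕ) : ℝ≥0∞))⁻¹ := by
      rw [hr, mul_pow, ← ENNReal.inv_pow]
      congr 2
      rw [← Nat.cast_pow]
      congr 1
      rw [two_mul, pow_add, mul_pow]
    have hinv : ((b ^ k : ℕ) : ℝ≥0∞)⁻¹ ≤ (((b ^ (2 * j) : ℕ) : ℝ≥0∞))⁻¹ :=
      ENNReal.inv_le_inv' (by exact_mod_cast h2j)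
    calc ((b ^ k : ℕ) : ℝ≥0∞)⁻¹ * nu b α β k
        ≤ ((b ^ k : ℕ) : ℝ≥0∞)⁻¹ * ((b : ℝ≥0∞) * c ^ j) :=
          mul_le_mul_right (nu_bound hb hα hβ k) _
      _ = (b : ℝ≥0∞) * (c ^ j * ((b ^ k : ℕ) : ℝ≥0∞)⁻¹) := by ring
      _ ≤ (b : ℝ≥0∞) * (c ^ j * (((b ^ (2 * j) : ℕ) : ℝ≥0∞))⁻¹) :=
          mul_le_mul_right (mul_le_mul_right hinv _) _
      _ = (b : ℝ≥0∞) * r ^ j := by rw [hrpow]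
  have hrlt : ¬ (1 : ℝ≥0∞) ≤ r := by
    intro h1
    have hd0 : (((b * b : ℕ) : ℝ≥0∞)) ≠ 0 := by
      simp only [ne_eq, Nat.cast_eq_zero]
      positivity
    have hdtop : (((b * b : ℕ) : ℝ≥0∞)) ≠ ∞ := ENNReal.natCast_ne_top _
    have : ((b * b : ℕ) : ℝ≥0∞) ≤ c := by
      calc ((b * b : ℕ) : ℝ≥0∞) = ((b * b : ℕ) : ℝ≥0∞) * 1 := (mul_one _).symm
        _ ≤ ((b * b : ℕ) : ℝ≥0∞) * r := mul_le_mul_right h1 _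
        _ = c * (((b * b : ℕ) : ℝ≥0∞) * (((b * b : ℕ) : ℝ≥0∞))⁻¹) := by rw [hr]; ring
        _ = c := by rw [ENNReal.mul_inv_cancel hd0 hdtop, mul_one]
    rw [hc] at this
    have hle := Nat.cast_le (α := ℝ≥0∞) |>.mp this
    have h1b : 1 ≤ b * b := by nlinarith
    omega
  have hgeo : (∑' j : ℕ, r ^ j) ≠ ∞ := by
    rw [ENNReal.tsum_geometric]
    rw [ne_eq, ENNReal.inv_eq_top, tsub_eq_zero_iff_le]
    exact hrlt
  have heo : (∑' k : ℕ, r ^ (k / 2)) ≠ ∞ := by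
    have h1 : ∀ j : ℕ, (2 * j) / 2 = j := fun j => by omega
    have h2 : ∀ j : ℕ, (2 * j + 1) / 2 = j := fun j => by omega
    have := tsum_even_add_odd (f := fun k => r ^ (k / 2)) ENNReal.summable ENNReal.summable
    rw [← this]
    simp only [h1, h2]
    exact ENNReal.add_ne_top.mpr ⟨hgeo, hgeo⟩
  have hfin : (∑' k : ℕ, (b : ℝ≥0∞) * r ^ (k / 2)) ≠ ∞ := by
    rw [ENNReal.tsum_mul_left]
    exact ENNReal.mul_ne_top (ENNReal.natCast_ne_top _) heo
  exact ne_top_of_le_ne_top hfin (ENNReal.tsum_le_tsum hstep)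

lemma Bset_finite (hb : 2 ≤ b) (hα : α < b) (hβ : β < b) {n : ℕ} (hn : 0 < n) :
    (∑' m : (Bset b α β n), ee m) ≠ ∞ :=
  ne_top_of_le_ne_top (total_finite hb hα hβ) (Bset_sum_le hb hn)

end BFinite

section Final
variable {b α β : ℕ}

lemma Bset_pos (hb : 2 ≤ b) {n m : ℕ} (hn : 0 < n) (hm : m ∈ Bset b α β n) : 0 < m := by
  obtain ⟨t, ht, -⟩ := hm
  rcases Nat.eq_zero_or_pos m with rfl | h
  · exfalso
    have h1 : digitsBE b 0 = [] := by simp [digitsBE]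
    rw [h1] at ht
    have h2 := digitsBE_ne_nil (b := b) hn
    rcases List.append_eq_nil_iff.mp ht.symm with ⟨h3, -⟩
    exact h2 h3
  · exact h

lemma ee_toReal {m : ℕ} : (ee m).toReal = (1 : ℝ) / m := by
  rw [ee, ENNReal.toReal_inv, one_div]
  simp

lemma U_eq (hb : 2 ≤ b) {n : ℕ} (hn : 0 < n) :
    U b α β n = (∑' m : (Bset b α β n), ee m).toReal := by
  rw [ENNReal.tsum_toReal_eq]
  · exact tsum_congr fun x => ee_toReal.symm
  · intro x
    have := Bset_pos hb hn x.2
    simp only [ee, ne_eq, ENNReal.inv_eq_top, Nat.cast_eq_zero]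
    omega

lemma K0_eq (hb : 2 ≤ b) : K0 b α β = (∑' m : (Aset b α β), ee m).toReal := by
  rw [ENNReal.tsum_toReal_eq]
  · exact tsum_congr fun x => ee_toReal.symm
  · intro x
    have := x.2.1
    simp only [ee, ne_eq, ENNReal.inv_eq_top, Nat.cast_eq_zero]
    omega

end Final


theorem stmt_12 (b : ℕ) (hb : 2 ≤ b) (α β : ℕ) (hα : α < b) (hβ : β < b) (hαβ : α ≠ β) :
    K0 b α β = (∑ n ∈ Finset.Icc 1 (b - 1), (1 : ℝ) / n)
      + (∑ n ∈ (Finset.Ico b (b ^ 2)).erase (α * b + β), U b α β n)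
      - ∑ n₁ ∈ Finset.Icc 1 (b - 1), U b α β (n₁ * b ^ 2 + α * b + β) := by
  have hkey := key_ennreal (b := b) (α := α) (β := β) hb hα hβ hαβ
  set EA := ∑' m : (Aset b α β), ee m with hEA
  set S3 := ∑ n₁ ∈ Finset.Icc 1 (b - 1), ∑' m : (Bset b α β (n₁ * b ^ 2 + α * b + β)), ee m with hS3
  set S1 := ∑ n ∈ Finset.Icc 1 (b - 1), ee n with hS1
  set S2 := ∑ n ∈ (Finset.Ico b (b ^ 2)).erase (α * b + β), ∑' m : (Bset b α β n), ee m with hS2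
  have hS1fin : S1 ≠ ∞ := by
    rw [hS1]
    refine (ENNReal.sum_lt_top.mpr fun n hn => ?_).ne
    rw [Finset.mem_Icc] at hn
    rw [ee, ENNReal.inv_lt_top]
    exact_mod_cast (by omega : 0 < n)
  have hS2fin : S2 ≠ ∞ := by
    rw [hS2]
    refine (ENNReal.sum_lt_top.mpr fun n hn => ?_).ne
    rw [Finset.mem_erase, Finset.mem_Ico] at hn
    exact (Bset_finite hb hα hβ (by omega)).lt_top
  have hRHSfin : S1 + S2 ≠ ∞ := ENNReal.add_ne_top.mpr ⟨hS1fin, hS2fin⟩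
  have hAfin : EA ≠ ∞ := ne_top_of_le_ne_top hRHSfin (le_trans le_self_add hkey.le)
  have hS3fin : S3 ≠ ∞ := ne_top_of_le_ne_top hRHSfin (le_trans le_add_self hkey.le)
  have hreal : EA.toReal + S3.toReal = S1.toReal + S2.toReal := by
    rw [← ENNReal.toReal_add hAfin hS3fin, ← ENNReal.toReal_add hS1fin hS2fin, hkey]
  have hU2 : ∑ n ∈ (Finset.Ico b (b ^ 2)).erase (α * b + β), U b α β n = S2.toReal := by
    rw [hS2, ENNReal.toReal_sum]
    · refine Finset.sum_congr rfl fun n hn => ?_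
      rw [Finset.mem_erase, Finset.mem_Ico] at hn
      exact U_eq hb (by omega)
    · intro n hn
      rw [Finset.mem_erase, Finset.mem_Ico] at hn
      exact Bset_finite hb hα hβ (by omega)
  have hU3 : ∑ n₁ ∈ Finset.Icc 1 (b - 1), U b α β (n₁ * b ^ 2 + α * b + β) = S3.toReal := by
    rw [hS3, ENNReal.toReal_sum]
    · refine Finset.sum_congr rfl fun n₁ hn₁ => ?_
      rw [Finset.mem_Icc] at hn₁
      refine U_eq hb ?_
      have : 1 * b ^ 2 ≤ n₁ * b ^ 2 := Nat.mul_le_mul_right _ (by omega)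
      nlinarith
    · intro n₁ hn₁
      rw [Finset.mem_Icc] at hn₁
      refine Bset_finite hb hα hβ ?_
      have : 1 * b ^ 2 ≤ n₁ * b ^ 2 := Nat.mul_le_mul_right _ (by omega)
      nlinarith
  have hS1' : ∑ n ∈ Finset.Icc 1 (b - 1), (1 : ℝ) / n = S1.toReal := by
    rw [hS1, ENNReal.toReal_sum]
    · exact Finset.sum_congr rfl fun n _ => ee_toReal.symm
    · intro n hn
      rw [Finset.mem_Icc] at hn
      simp only [ee, ne_eq, ENNReal.inv_eq_top, Nat.cast_eq_zero]
      omega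
  rw [K0_eq hb, hU2, hU3, hS1']
  linarith
end

section
/- Let b ≥ 2 and α a digit. Define u₀ = b² and for m ≥ 1, (b^{m+1} − (b−1) − (b−1)b^{-m-1})·u_m = Σ_{j=1}^{m} C(m,j)·(γ'_j + b^{-m-1}·θ'_j)·u_{m-j}, where γ'_j = Σ_{d≠α} d^j and θ'_j = Σ_{d≠α} (db+α)^j (sums over digits 0 ≤ d < b, d ≠ α). Then u_m = ∫ x^m dσ(x) where σ is the measure on [0,1) giving weight b^{-l} to n(X)/b^l for each length-l string X avoiding αα and not starting with α; consequently (u_m) is positive and decreasing to 0. -/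
open MeasureTheory

/-- The integer whose base-`b` digit string (leading digit first, possibly with
leading zeros) is `s`. -/
def strVal (b : ℕ) (s : List (Fin b)) : ℕ := s.foldl (fun a d => a * b + d.val) 0

/-- The measure `σ` on `[0,1) ⊆ ℝ` assigning weight `b^{-l}` to `n(X)/b^l` for each
string `X` of length `l` over `Fin b` avoiding the contiguous pattern `αα` and
whose leading digit (if any) is not `α`. -/
noncomputable def sigma (b : ℕ) (α : Fin b) : Measure ℝ :=
  Measure.sum
    (fun s : {s : List (Fin b) // ¬ [α, α] <:+: s ∧ s.head? ≠ some α} =>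
      ((b : ENNReal) ^ s.1.length)⁻¹ •
        Measure.dirac ((strVal b s.1 : ℝ) / (b : ℝ) ^ s.1.length))

namespace Stmt17Aux

variable {b : ℕ}

/-- Strings avoiding `αα` (no head restriction). -/
def QS (b : ℕ) (α : Fin b) : Set (List (Fin b)) := {t | ¬ [α, α] <:+: t}

/-- Strings avoiding `αα` with head ≠ α. -/
def PS (b : ℕ) (α : Fin b) : Set (List (Fin b)) :=
  {t | ¬ [α, α] <:+: t ∧ t.head? ≠ some α}

lemma singleton_prefix_iff (α : Fin b) (t : List (Fin b)) :
    [α] <+: t ↔ t.head? = some α := by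
  cases t with
  | nil => simp
  | cons e r => simp [List.cons_prefix_cons, eq_comm]

lemma mem_PS_cons (α : Fin b) (d : Fin b) (t : List (Fin b)) :
    d :: t ∈ PS b α ↔ d ≠ α ∧ t ∈ QS b α := by
  simp only [PS, QS, Set.mem_setOf_eq, List.head?_cons, List.infix_cons_iff]
  constructor
  · rintro ⟨h1, h2⟩
    refine ⟨by simpa [eq_comm] using h2, fun h => h1 (Or.inr h)⟩
  · rintro ⟨h1, h2⟩
    refine ⟨?_, by simpa [eq_comm] using h1⟩
    rintro (h | h)
    · rw [List.cons_prefix_cons] at h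
      exact h1 h.1.symm
    · exact h2 h

lemma mem_QS_alpha_cons (α : Fin b) (t : List (Fin b)) :
    α :: t ∈ QS b α ↔ t ∈ PS b α := by
  simp only [QS, PS, Set.mem_setOf_eq, List.infix_cons_iff]
  constructor
  · intro h
    push_neg at h
    obtain ⟨h1, h2⟩ := h
    refine ⟨h2, fun hh => h1 ?_⟩
    rw [List.cons_prefix_cons]
    exact ⟨rfl, (singleton_prefix_iff α t).2 hh⟩
  · rintro ⟨h1, h2⟩
    rintro (h | h)
    · rw [List.cons_prefix_cons] at h
      exact h2 ((singleton_prefix_iff α t).1 h.2)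
    · exact h1 h

lemma nil_mem_PS (α : Fin b) : [] ∈ PS b α := by
  constructor
  · rintro ⟨s, t, h⟩
    simpa using congrArg List.length h
  · simp

lemma strVal_foldl (t : List (Fin b)) (a : ℕ) :
    t.foldl (fun a d => a * b + d.val) a = a * b ^ t.length + strVal b t := by
  induction t generalizing a with
  | nil => simp [strVal]
  | cons d r ih =>
    show r.foldl _ (a * b + d.val) = _
    rw [ih (a * b + d.val)]
    have : strVal b (d :: r) = d.val * b ^ r.length + strVal b r := by
      show r.foldl _ (0 * b + d.val) = _
      rw [ih (0 * b + d.val)]; ring_nf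
    rw [this]; simp [List.length_cons]; ring

lemma strVal_cons (d : Fin b) (t : List (Fin b)) :
    strVal b (d :: t) = d.val * b ^ t.length + strVal b t := by
  show t.foldl _ (0 * b + d.val) = _
  rw [strVal_foldl]; ring_nf

lemma strVal_lt (hb : 0 < b) (t : List (Fin b)) : strVal b t < b ^ t.length := by
  induction t with
  | nil => simpa [strVal]
  | cons d r ih =>
    rw [strVal_cons]
    calc d.val * b ^ r.length + strVal b r < d.val * b ^ r.length + b ^ r.length := by omega
    _ = (d.val + 1) * b ^ r.length := by ring
    _ ≤ b * b ^ r.length := by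
        have := d.isLt
        exact Nat.mul_le_mul_right _ (by omega)
    _ = b ^ (d :: r).length := by rw [List.length_cons]; ring

/-- real value of a string, in `[0,1)`. -/
noncomputable def xval (b : ℕ) (t : List (Fin b)) : ℝ :=
  (strVal b t : ℝ) / (b : ℝ) ^ t.length

lemma xval_nonneg (t : List (Fin b)) : 0 ≤ xval b t := by
  apply div_nonneg <;> positivity

lemma xval_lt_one (hb : 0 < b) (t : List (Fin b)) : xval b t < 1 := by
  rw [xval, div_lt_one (by positivity)]
  exact_mod_cast strVal_lt hb t

lemma xval_cons (hb : 0 < b) (d : Fin b) (t : List (Fin b)) :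
    xval b (d :: t) = ((d.val : ℝ) + xval b t) / b := by
  have hb' : (b : ℝ) ≠ 0 := by positivity
  have h1 : (b : ℝ) ^ t.length ≠ 0 := by positivity
  rw [xval, xval, strVal_cons, List.length_cons]
  push_cast
  rw [div_eq_div_iff (by positivity) hb', pow_succ]
  field_simp

end Stmt17Aux

namespace Stmt17Aux

open ENNReal

variable {b : ℕ}

noncomputable def wv (b : ℕ) (t : List (Fin b)) : ℝ≥0∞ := ((b : ℝ≥0∞) ^ t.length)⁻¹

noncomputable def Y (b : ℕ) (t : List (Fin b)) : ℝ≥0∞ := ENNReal.ofReal (xval b t)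

noncomputable def SP (b : ℕ) (α : Fin b) (F : List (Fin b) → ℝ≥0∞) : ℝ≥0∞ :=
  ∑' t : List (Fin b), (PS b α).indicator F t

lemma tsum_list_split {γ : Type*} (g : List γ → ℝ≥0∞) :
    ∑' t : List γ, g t = g [] + ∑' p : γ × List γ, g (p.1 :: p.2) := by
  classical
  have h1 : ∀ t : List γ, g t = (if t = [] then g [] else 0) + (if t = [] then 0 else g t) := by
    intro t; by_cases h : t = [] <;> simp [h]
  rw [tsum_congr h1, ENNReal.tsum_add]
  congr 1
  · rw [tsum_eq_single ([] : List γ) (fun t ht => by simp [ht])]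
    simp
  have hinj : Function.Injective (fun p : γ × List γ => p.1 :: p.2) := by
    rintro ⟨a, s⟩ ⟨a', s'⟩ h
    simpa [Prod.ext_iff] using h
  rw [← hinj.tsum_eq (f := fun t => if t = [] then 0 else g t) ?_]
  · apply tsum_congr; rintro ⟨a, s⟩; simp
  · intro t ht
    simp only [Function.mem_support, ne_eq, ite_eq_left_iff, not_forall] at ht
    obtain ⟨hne, -⟩ := ht
    cases t with
    | nil => exact absurd rfl hne
    | cons a s => exact ⟨(a, s), rfl⟩

lemma qsplit (α : Fin b) (G : List (Fin b) → ℝ≥0∞) :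
    ∑' t, (QS b α).indicator G t = SP b α G + SP b α (fun t => G (α :: t)) := by
  have key : ∀ t, (QS b α).indicator G t
      = (PS b α).indicator G t + ((QS b α) ∩ {t | t.head? = some α}).indicator G t := by
    intro t
    by_cases hh : t.head? = some α
    · have hP : t ∉ PS b α := fun h => h.2 hh
      by_cases hq : t ∈ QS b α
      · simp [Set.indicator_apply, hP, hq, hh, Set.mem_inter_iff, Set.mem_setOf_eq]
      · simp [Set.indicator_apply, hP, hq, Set.mem_inter_iff]
    · have : t ∈ PS b α ↔ t ∈ QS b α := by
        constructor
        · exact fun h => h.1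
        · exact fun h => ⟨h, hh⟩
      by_cases hq : t ∈ QS b α
      · simp [Set.indicator_apply, hq, this.2 hq, hh, Set.mem_inter_iff, Set.mem_setOf_eq]
      · have h1 : t ∉ PS b α := fun h => hq (this.1 h)
        have h2 : t ∉ QS b α ∩ {t | t.head? = some α} := fun h => hq h.1
        rw [Set.indicator_of_notMem hq, Set.indicator_of_notMem h1,
          Set.indicator_of_notMem h2, add_zero]
  rw [tsum_congr key, ENNReal.tsum_add]
  congr 1
  have hinj : Function.Injective (fun t : List (Fin b) => α :: t) := by
    intro s s' h; simpa using h
  rw [SP, ← hinj.tsum_eq (f := ((QS b α) ∩ {t | t.head? = some α}).indicator G) ?_]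
  · apply tsum_congr; intro t
    by_cases ht : t ∈ PS b α
    · have : α :: t ∈ QS b α ∩ {t | t.head? = some α} := by
        exact ⟨(mem_QS_alpha_cons α t).2 ht, by simp⟩
      simp [Set.indicator_apply, ht, this]
    · have : α :: t ∉ QS b α ∩ {t | t.head? = some α} := by
        rintro ⟨h1, -⟩
        exact ht ((mem_QS_alpha_cons α t).1 h1)
      simp [Set.indicator_apply, ht, this]
  · intro t ht
    rw [Function.mem_support, Set.indicator_apply_ne_zero] at ht
    obtain ⟨⟨-, hh⟩, -⟩ := ht
    cases t with
    | nil => simp at hh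
    | cons e r =>
      simp only [Set.mem_setOf_eq, List.head?_cons, Option.some.injEq] at hh
      exact ⟨r, by rw [hh]⟩

lemma master (α : Fin b) (F : List (Fin b) → ℝ≥0∞) :
    SP b α F = F [] + ∑ d : Fin b, (if d = α then 0 else
      (SP b α (fun t => F (d :: t)) + SP b α (fun t => F (d :: α :: t)))) := by
  rw [SP, tsum_list_split]
  congr 1
  · exact Set.indicator_of_mem (nil_mem_PS α) F
  rw [show (∑' p : Fin b × List (Fin b), (PS b α).indicator F (p.1 :: p.2))
      = ∑' d : Fin b, ∑' t, (PS b α).indicator F (d :: t) from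
    ENNReal.tsum_prod (f := fun d t => (PS b α).indicator F (d :: t))]
  rw [tsum_fintype]
  apply Finset.sum_congr rfl
  intro d _
  have key : ∀ t, (PS b α).indicator F (d :: t)
      = if d = α then 0 else (QS b α).indicator (fun t => F (d :: t)) t := by
    intro t
    by_cases hd : d = α
    · subst hd
      have : d :: t ∉ PS b d := fun h => ((mem_PS_cons d d t).1 h).1 rfl
      simp [Set.indicator_of_notMem this]
    · by_cases ht : t ∈ QS b α
      · have : d :: t ∈ PS b α := (mem_PS_cons α d t).2 ⟨hd, ht⟩
        simp [Set.indicator_apply, this, hd, ht]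
      · have : d :: t ∉ PS b α := fun h => ht ((mem_PS_cons α d t).1 h).2
        simp [Set.indicator_apply, this, hd, ht]
  rw [tsum_congr key]
  by_cases hd : d = α
  · simp [hd]
  · simp only [hd, if_false]
    rw [qsplit]

lemma SP_mul_left (α : Fin b) (c : ℝ≥0∞) (F : List (Fin b) → ℝ≥0∞) :
    SP b α (fun t => c * F t) = c * SP b α F := by
  rw [SP, SP, ← ENNReal.tsum_mul_left]
  apply tsum_congr; intro t
  by_cases h : t ∈ PS b α <;> simp [Set.indicator_apply, h]

lemma SP_mono {α : Fin b} {F G : List (Fin b) → ℝ≥0∞} (h : ∀ t, F t ≤ G t) :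
    SP b α F ≤ SP b α G := by
  apply ENNReal.tsum_le_tsum
  intro t
  exact Set.indicator_le_indicator' (fun _ => h t)

end Stmt17Aux

namespace Stmt17Aux

open ENNReal Finset

variable {b : ℕ}

noncomputable def W (b : ℕ) (α : Fin b) (m : ℕ) : ℝ≥0∞ :=
  SP b α (fun t => wv b t * Y b t ^ m)

lemma wv_eq (t : List (Fin b)) : wv b t = ((b : ℝ≥0∞)⁻¹) ^ t.length := by
  rw [wv, ← ENNReal.inv_pow]

lemma wv_cons (d : Fin b) (t : List (Fin b)) :
    wv b (d :: t) = (b : ℝ≥0∞)⁻¹ * wv b t := by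
  rw [wv_eq, wv_eq, List.length_cons, pow_succ]; ring

lemma xval_nil : xval b ([] : List (Fin b)) = 0 := by
  simp [xval, strVal]

lemma Y_cons (hb : 0 < b) (d : Fin b) (t : List (Fin b)) :
    Y b (d :: t) = (ENNReal.ofReal (d.val : ℝ) + Y b t) * (b : ℝ≥0∞)⁻¹ := by
  have hb' : (0 : ℝ) < b := by positivity
  rw [Y, Y, xval_cons hb, ENNReal.ofReal_div_of_pos hb',
    ENNReal.ofReal_add (by positivity) (xval_nonneg t),
    div_eq_mul_inv]
  simp

lemma xval_cons2 (hb : 0 < b) (d e : Fin b) (t : List (Fin b)) :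
    xval b (d :: e :: t) = ((d.val : ℝ) * b + e.val + xval b t) / (b : ℝ) ^ 2 := by
  have hb' : (b : ℝ) ≠ 0 := by positivity
  rw [xval_cons hb, xval_cons hb]
  field_simp
  ring

lemma Y_cons2 (hb : 0 < b) (d e : Fin b) (t : List (Fin b)) :
    Y b (d :: e :: t) =
      (ENNReal.ofReal ((d.val : ℝ) * b + e.val) + Y b t) * ((b : ℝ≥0∞)⁻¹) ^ 2 := by
  have hb' : (0 : ℝ) < (b : ℝ) ^ 2 := by positivity
  rw [Y, Y, xval_cons2 hb, ENNReal.ofReal_div_of_pos hb',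
    ENNReal.ofReal_add (by positivity) (xval_nonneg t), div_eq_mul_inv,
    ENNReal.ofReal_pow (by positivity), ENNReal.ofReal_natCast, ENNReal.inv_pow]

lemma SP_sum {ι : Type*} (α : Fin b) (s : Finset ι) (f : ι → List (Fin b) → ℝ≥0∞) :
    SP b α (fun t => ∑ j ∈ s, f j t) = ∑ j ∈ s, SP b α (f j) := by
  rw [SP, show (∑ j ∈ s, SP b α (f j)) = ∑ j ∈ s, ∑' t, (PS b α).indicator (f j) t from rfl,
    ← Summable.tsum_finsetSum (fun j _ => ENNReal.summable)]
  apply tsum_congr; intro t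
  by_cases h : t ∈ PS b α
  · simp [Set.indicator_of_mem h]
  · simp [Set.indicator_of_notMem h]

lemma SP_block (α : Fin b) (m : ℕ) (A c : ℝ≥0∞) (G : List (Fin b) → ℝ≥0∞)
    (hG : ∀ t, G t = c * wv b t * (A + Y b t) ^ m) :
    SP b α G = ∑ j ∈ Finset.range (m + 1),
      c * A ^ j * (m.choose j) * W b α (m - j) := by
  have key : G = fun t => ∑ j ∈ Finset.range (m + 1),
      (c * A ^ j * (m.choose j)) * (wv b t * Y b t ^ (m - j)) := by
    funext t
    rw [hG, add_pow, Finset.mul_sum]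
    apply Finset.sum_congr rfl; intro j hj
    ring
  rw [key, SP_sum]
  apply Finset.sum_congr rfl; intro j hj
  rw [SP_mul_left]
  rfl

/-- The master functional equation for moments. -/
lemma Weq (α : Fin b) (hb : 0 < b) (m : ℕ) :
    W b α m = 0 ^ m + ∑ d : Fin b, (if d = α then 0 else
      ∑ j ∈ Finset.range (m + 1),
        ((((b : ℝ≥0∞)⁻¹) ^ (m + 1) * ENNReal.ofReal (d.val : ℝ) ^ j
          + ((b : ℝ≥0∞)⁻¹) ^ (2 * m + 2) * ENNReal.ofReal ((d.val : ℝ) * b + α.val) ^ j)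
          * (m.choose j)) * W b α (m - j)) := by
  rw [W, master α]
  congr 1
  · simp [wv, Y, xval_nil]
  apply Finset.sum_congr rfl
  intro d _
  by_cases hd : d = α
  · simp [hd]
  simp only [hd, if_false]
  rw [SP_block α m (ENNReal.ofReal (d.val : ℝ)) (((b : ℝ≥0∞)⁻¹) ^ (m + 1))
      _ (fun t => by rw [wv_cons, Y_cons hb, mul_pow]; ring),
    SP_block α m (ENNReal.ofReal ((d.val : ℝ) * b + α.val)) (((b : ℝ≥0∞)⁻¹) ^ (2 * m + 2))
      _ (fun t => by
        rw [wv_cons, wv_cons, Y_cons2 hb, mul_pow, ← pow_mul]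
        have : 2 * m + 2 = 2 + 2 * m := by ring
        rw [this, pow_add, pow_succ, pow_one, mul_comm 2 m]
        ring),
    ← Finset.sum_add_distrib]
  apply Finset.sum_congr rfl; intro j hj
  ring

end Stmt17Aux

namespace Stmt17Aux

open ENNReal Finset

variable {b : ℕ}

noncomputable def gN (b : ℕ) (α : Fin b) (N : ℕ) : ℝ≥0∞ :=
  SP b α (fun t => if t.length ≤ N then wv b t else 0)

lemma gN_zero (α : Fin b) : gN b α 0 ≤ 1 := by
  rw [gN, SP]
  rw [tsum_eq_single ([] : List (Fin b)) ?_]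
  · by_cases h : ([] : List (Fin b)) ∈ PS b α
    · simp [Set.indicator_of_mem h, wv]
    · simp [Set.indicator_of_notMem h]
  · intro t ht
    have : ¬ t.length ≤ 0 := by
      cases t with
      | nil => exact absurd rfl ht
      | cons d r => simp
    by_cases h : t ∈ PS b α
    · simp [Set.indicator_of_mem h, this, ht]
    · simp [Set.indicator_of_notMem h]

lemma card_ne (hb : 0 < b) (α : Fin b) :
    (Finset.univ.filter (fun d : Fin b => ¬ d = α)).card = b - 1 := by
  have : (Finset.univ.filter (fun d : Fin b => ¬ d = α)) = Finset.univ.erase α := by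
    ext d; simp [Finset.mem_erase, and_comm]
  rw [this, Finset.card_erase_of_mem (Finset.mem_univ α)]
  simp

lemma gN_succ_le (hb : 0 < b) (α : Fin b) (N : ℕ) :
    gN b α (N + 1) ≤ 1 + (b - 1 : ℕ) *
      (((b : ℝ≥0∞)⁻¹ + ((b : ℝ≥0∞)⁻¹) ^ 2) * gN b α N) := by
  rw [gN, master α]
  have h0 : (if ([] : List (Fin b)).length ≤ N + 1 then wv b ([] : List (Fin b)) else 0) = 1 := by
    simp [wv]
  rw [h0]
  apply add_le_add_right
  have hbound : ∀ d : Fin b, (if d = α then 0 else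
      (SP b α (fun t => if (d :: t).length ≤ N + 1 then wv b (d :: t) else 0)
        + SP b α (fun t => if (d :: α :: t).length ≤ N + 1 then wv b (d :: α :: t) else 0)))
      ≤ (if d = α then 0 else ((b : ℝ≥0∞)⁻¹ + ((b : ℝ≥0∞)⁻¹) ^ 2) * gN b α N) := by
    intro d
    by_cases hd : d = α
    · simp [hd]
    simp only [hd, if_false]
    rw [add_mul]
    apply add_le_add
    · have : (fun t : List (Fin b) => if (d :: t).length ≤ N + 1 then wv b (d :: t) else 0)
          = fun t => (b : ℝ≥0∞)⁻¹ * (if t.length ≤ N then wv b t else 0) := by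
        funext t
        rw [wv_cons, List.length_cons, mul_ite, mul_zero]
        congr 1
        simp
      rw [this, SP_mul_left, gN]
    · apply le_trans (SP_mono (G := fun t =>
          ((b : ℝ≥0∞)⁻¹) ^ 2 * (if t.length ≤ N then wv b t else 0)) ?_)
      · rw [SP_mul_left, gN]
      · intro t
        by_cases ht : t.length + 2 ≤ N + 1
        · have ht' : t.length ≤ N := by omega
          simp only [List.length_cons, ht, ht', if_true]
          rw [wv_cons, wv_cons, sq]
          exact le_of_eq (by ring)
        · simp [List.length_cons, show ¬ t.length + 1 + 1 ≤ N + 1 from ht]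
  calc ∑ d : Fin b, (if d = α then 0 else _) ≤
      ∑ d : Fin b, (if d = α then 0 else ((b : ℝ≥0∞)⁻¹ + ((b : ℝ≥0∞)⁻¹) ^ 2) * gN b α N) :=
        Finset.sum_le_sum (fun d _ => hbound d)
    _ = (b - 1 : ℕ) * (((b : ℝ≥0∞)⁻¹ + ((b : ℝ≥0∞)⁻¹) ^ 2) * gN b α N) := by
        rw [Finset.sum_ite, Finset.sum_const, Finset.sum_const, smul_zero, zero_add,
          card_ne hb α, nsmul_eq_mul]

lemma gN_le (hb : 2 ≤ b) (α : Fin b) : ∀ N, gN b α N ≤ ((b : ℝ≥0∞)) ^ 2 := by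
  have hb0 : 0 < b := by omega
  have hbne : (b : ℝ≥0∞) ≠ 0 := by exact_mod_cast Nat.pos_iff_ne_zero.mp hb0
  have hbtop : (b : ℝ≥0∞) ≠ ∞ := ENNReal.natCast_ne_top b
  intro N
  induction N with
  | zero => exact le_trans (gN_zero α) (by
      calc (1 : ℝ≥0∞) = 1 ^ 2 := by norm_num
      _ ≤ (b : ℝ≥0∞) ^ 2 := by
          gcongr
          exact_mod_cast (by omega : 1 ≤ b))
  | succ N ih =>
    refine le_trans (gN_succ_le hb0 α N) ?_
    have step : (b - 1 : ℕ) * (((b : ℝ≥0∞)⁻¹ + ((b : ℝ≥0∞)⁻¹) ^ 2) * gN b α N)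
        ≤ (b - 1 : ℕ) * ((b : ℝ≥0∞) + 1) := by
      apply mul_le_mul_right 
      calc ((b : ℝ≥0∞)⁻¹ + ((b : ℝ≥0∞)⁻¹) ^ 2) * gN b α N
          ≤ ((b : ℝ≥0∞)⁻¹ + ((b : ℝ≥0∞)⁻¹) ^ 2) * (b : ℝ≥0∞) ^ 2 := mul_le_mul_right ih _
        _ = (b : ℝ≥0∞) + 1 := by
            rw [add_mul, sq, sq, ← mul_assoc]
            rw [ENNReal.inv_mul_cancel hbne hbtop, one_mul]
            rw [show (b : ℝ≥0∞)⁻¹ * (b : ℝ≥0∞)⁻¹ * ((b : ℝ≥0∞) * (b : ℝ≥0∞))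
              = ((b : ℝ≥0∞)⁻¹ * (b : ℝ≥0∞)) * ((b : ℝ≥0∞)⁻¹ * (b : ℝ≥0∞)) from by ring,
              ENNReal.inv_mul_cancel hbne hbtop, one_mul]
    refine le_trans (add_le_add_right step 1) ?_
    have : (1 : ℝ≥0∞) + (b - 1 : ℕ) * ((b : ℝ≥0∞) + 1) = ((1 + (b-1) * (b+1) : ℕ) : ℝ≥0∞) := by
      push_cast
      ring
    rw [this]
    have : 1 + (b - 1) * (b + 1) = b ^ 2 := by
      cases b with
      | zero => omega
      | succ k =>
        simp only [Nat.succ_sub_one]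
        ring
    rw [this]
    push_cast
    ring_nf
    exact le_refl _

lemma W_zero_le (hb : 2 ≤ b) (α : Fin b) : W b α 0 ≤ ((b : ℝ≥0∞)) ^ 2 := by
  have : W b α 0 = ∑' t : List (Fin b), (PS b α).indicator (fun t => wv b t) t := by
    rw [W, SP]
    apply tsum_congr; intro t
    by_cases h : t ∈ PS b α <;> simp [Set.indicator_apply, h]
  rw [this, ENNReal.tsum_eq_iSup_sum]
  apply iSup_le
  intro s
  set N := s.sup List.length with hN
  have key : ∀ t ∈ s, (PS b α).indicator (fun t => wv b t) t
      = (PS b α).indicator (fun t => if t.length ≤ N then wv b t else 0) t := by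
    intro t ht
    have hlen : t.length ≤ N := Finset.le_sup (f := List.length) ht
    by_cases h : t ∈ PS b α <;> simp [Set.indicator_apply, h, hlen]
  rw [Finset.sum_congr rfl key]
  refine le_trans (ENNReal.sum_le_tsum s) (le_trans ?_ (gN_le hb α N))
  rw [gN, SP]

lemma Y_le_one (hb : 0 < b) (t : List (Fin b)) : Y b t ≤ 1 := by
  rw [Y, ← ENNReal.ofReal_one]
  exact ENNReal.ofReal_le_ofReal (le_of_lt (xval_lt_one hb t))

lemma W_le_W_zero (hb : 0 < b) (α : Fin b) (m : ℕ) : W b α m ≤ W b α 0 := by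
  apply SP_mono
  intro t
  calc wv b t * Y b t ^ m ≤ wv b t * 1 := by
        apply mul_le_mul_right
        exact pow_le_one' (Y_le_one hb t) m
    _ = wv b t * Y b t ^ 0 := by simp

lemma W_ne_top (hb : 2 ≤ b) (α : Fin b) (m : ℕ) : W b α m ≠ ∞ := by
  have := le_trans (W_le_W_zero (by omega) α m) (W_zero_le hb α)
  exact ne_top_of_le_ne_top (by simp [ENNReal.pow_ne_top, ENNReal.natCast_ne_top]) this

end Stmt17Aux

namespace Stmt17Aux

open ENNReal Finset

variable {b : ℕ}

noncomputable def V (b : ℕ) (α : Fin b) (m : ℕ) : ℝ := (W b α m).toReal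

lemma V_nonneg (α : Fin b) (m : ℕ) : 0 ≤ V b α m := ENNReal.toReal_nonneg

lemma Veq (hb : 2 ≤ b) (α : Fin b) (m : ℕ) :
    V b α m = (0 : ℝ) ^ m + ∑ d : Fin b, (if d = α then 0 else
      ∑ j ∈ Finset.range (m + 1),
        ((((b : ℝ)⁻¹) ^ (m + 1) * (d.val : ℝ) ^ j
          + ((b : ℝ)⁻¹) ^ (2 * m + 2) * ((d.val : ℝ) * (b : ℝ) + (α.val : ℝ)) ^ j)
          * (m.choose j)) * V b α (m - j)) := by
  have hb0 : 0 < b := by omega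
  have hWf : ∀ k, W b α k ≠ ∞ := W_ne_top hb α
  have hterm : ∀ (d : Fin b) (j : ℕ),
      ((((b : ℝ≥0∞)⁻¹) ^ (m + 1) * ENNReal.ofReal (d.val : ℝ) ^ j
        + ((b : ℝ≥0∞)⁻¹) ^ (2 * m + 2) * ENNReal.ofReal ((d.val : ℝ) * b + α.val) ^ j)
        * (m.choose j)) * W b α (m - j) ≠ ∞ := by
    intro d j
    apply ENNReal.mul_ne_top _ (hWf _)
    apply ENNReal.mul_ne_top _ (ENNReal.natCast_ne_top _)
    apply ENNReal.add_ne_top.2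
    constructor
    · exact ENNReal.mul_ne_top (ENNReal.pow_ne_top (ENNReal.inv_ne_top.2 (by
        exact_mod_cast Nat.pos_iff_ne_zero.mp hb0))) (ENNReal.pow_ne_top ENNReal.ofReal_ne_top)
    · exact ENNReal.mul_ne_top (ENNReal.pow_ne_top (ENNReal.inv_ne_top.2 (by
        exact_mod_cast Nat.pos_iff_ne_zero.mp hb0))) (ENNReal.pow_ne_top ENNReal.ofReal_ne_top)
  have hdterm : ∀ d : Fin b, (if d = α then 0 else
      ∑ j ∈ Finset.range (m + 1),
        ((((b : ℝ≥0∞)⁻¹) ^ (m + 1) * ENNReal.ofReal (d.val : ℝ) ^ j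
          + ((b : ℝ≥0∞)⁻¹) ^ (2 * m + 2) * ENNReal.ofReal ((d.val : ℝ) * b + α.val) ^ j)
          * (m.choose j)) * W b α (m - j)) ≠ ∞ := by
    intro d
    by_cases hd : d = α
    · simp [hd]
    · simp only [hd, if_false]
      exact (ENNReal.sum_lt_top.2 (fun j _ => (hterm d j).lt_top)).ne
  rw [V, Weq α hb0 m,
    ENNReal.toReal_add (ENNReal.pow_ne_top (by simp)) ?hsum]
  case hsum => exact (ENNReal.sum_lt_top.2 (fun d _ => (hdterm d).lt_top)).ne
  rw [ENNReal.toReal_pow, ENNReal.toReal_zero, ENNReal.toReal_sum (fun d _ => hdterm d)]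
  congr 1
  apply Finset.sum_congr rfl
  intro d _
  rw [apply_ite ENNReal.toReal, ENNReal.toReal_zero]
  by_cases hd : d = α
  · simp [hd]
  simp only [hd, if_false]
  rw [ENNReal.toReal_sum (fun j _ => hterm d j)]
  apply Finset.sum_congr rfl
  intro j _
  rw [ENNReal.toReal_mul, ENNReal.toReal_mul, ENNReal.toReal_add, ENNReal.toReal_mul,
    ENNReal.toReal_mul, ENNReal.toReal_pow, ENNReal.toReal_pow, ENNReal.toReal_pow,
    ENNReal.toReal_pow, ENNReal.toReal_inv, ENNReal.toReal_natCast, ENNReal.toReal_natCast,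
    ENNReal.toReal_ofReal (by positivity), ENNReal.toReal_ofReal (by positivity)]
  · rfl
  · exact ENNReal.mul_ne_top (ENNReal.pow_ne_top (ENNReal.inv_ne_top.2 (by
      exact_mod_cast Nat.pos_iff_ne_zero.mp hb0))) (ENNReal.pow_ne_top ENNReal.ofReal_ne_top)
  · exact ENNReal.mul_ne_top (ENNReal.pow_ne_top (ENNReal.inv_ne_top.2 (by
      exact_mod_cast Nat.pos_iff_ne_zero.mp hb0))) (ENNReal.pow_ne_top ENNReal.ofReal_ne_top)

lemma sum_ite_zero_erase {M : Type*} [AddCommMonoid M] (α : Fin b) (g : Fin b → M) :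
    ∑ d : Fin b, (if d = α then 0 else g d) = ∑ d ∈ Finset.univ.erase α, g d := by
  classical
  rw [Finset.sum_ite, Finset.sum_const_zero, zero_add]
  congr 1
  ext d
  simp only [Finset.mem_filter, Finset.mem_univ, true_and, Finset.mem_erase, and_true, ne_eq]

lemma sum_erase_val (α : Fin b) (f : ℕ → ℝ) :
    ∑ d ∈ Finset.univ.erase α, f d.val = ∑ n ∈ (Finset.range b).erase α.val, f n := by
  have him : (Finset.range b).erase α.val = (Finset.univ.erase α).image Fin.val := by
    ext n
    simp only [Finset.mem_erase, Finset.mem_range, Finset.mem_image, Finset.mem_univ, true_and]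
    constructor
    · rintro ⟨hne, hlt⟩
      exact ⟨⟨n, hlt⟩, ⟨fun h => hne (congrArg Fin.val h), trivial⟩, rfl⟩
    · rintro ⟨d, ⟨hd, -⟩, rfl⟩
      exact ⟨fun h => hd (Fin.val_injective h), d.isLt⟩
  rw [him, Finset.sum_image (fun x _ y _ h => Fin.val_injective h)]

lemma card_range_erase (hb : 0 < b) (α : Fin b) :
    ((Finset.range b).erase α.val).card = b - 1 := by
  rw [Finset.card_erase_of_mem (Finset.mem_range.2 α.isLt), Finset.card_range]

end Stmt17Aux

namespace Stmt17Aux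

open ENNReal Finset

variable {b : ℕ}

lemma V_zero (hb : 2 ≤ b) (α : Fin b) : V b α 0 = (b : ℝ) ^ 2 := by
  have h := Veq hb α 0
  have hbne : (b : ℝ) ≠ 0 := by positivity
  simp only [zero_add, mul_zero, Finset.sum_range_one, pow_zero, pow_one, Nat.choose_self,
    Nat.cast_one, mul_one, Nat.sub_self] at h
  rw [sum_ite_zero_erase, Finset.sum_const, Finset.card_erase_of_mem (Finset.mem_univ α),
    Finset.card_univ, Fintype.card_fin, nsmul_eq_mul] at h
  have hcast : ((b - 1 : ℕ) : ℝ) = (b : ℝ) - 1 := by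
    rw [Nat.cast_sub (by omega)]; norm_num
  rw [hcast] at h
  field_simp at h
  have h2 : (b : ℝ) * V b α 0 = (b : ℝ) * (b : ℝ) ^ 2 := by linear_combination (b : ℝ) * h
  exact mul_left_cancel₀ hbne h2

lemma Vrec (hb : 2 ≤ b) (α : Fin b) (m : ℕ) (hm : 1 ≤ m) :
    ((b : ℝ) ^ (m + 1) - ((b : ℝ) - 1) - ((b : ℝ) - 1) * ((b : ℝ) ^ (m + 1))⁻¹) * V b α m =
      ∑ j ∈ Finset.Icc 1 m, (Nat.choose m j : ℝ) *
        ((∑ d ∈ (Finset.range b).erase α.val, (d : ℝ) ^ j) +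
          ((b : ℝ) ^ (m + 1))⁻¹ *
            ∑ d ∈ (Finset.range b).erase α.val, ((d : ℝ) * b + α.val) ^ j) *
        V b α (m - j) := by
  have hbne : (b : ℝ) ≠ 0 := by positivity
  set K : ℝ := ((b : ℝ) ^ (m + 1))⁻¹ with hKdef
  have hK : (b : ℝ) ^ (m + 1) * K = 1 := mul_inv_cancel₀ (by positivity)
  have h := Veq hb α m
  rw [zero_pow (by omega), zero_add, sum_ite_zero_erase] at h
  have e1 : ((b : ℝ)⁻¹) ^ (m + 1) = K := by rw [hKdef, inv_pow]
  have e2 : ((b : ℝ)⁻¹) ^ (2 * m + 2) = K ^ 2 := by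
    rw [hKdef, ← inv_pow, ← pow_mul]
    congr 1
    ring
  simp only [e1, e2] at h
  rw [Finset.sum_comm] at h
  -- pull the d-sums inside each j
  have hj : ∀ j ∈ Finset.range (m + 1),
      (∑ d ∈ Finset.univ.erase α,
        (K * (d.val : ℝ) ^ j + K ^ 2 * ((d.val : ℝ) * (b : ℝ) + (α.val : ℝ)) ^ j)
          * (m.choose j : ℝ) * V b α (m - j))
      = (K * (∑ n ∈ (Finset.range b).erase α.val, (n : ℝ) ^ j)
          + K ^ 2 * (∑ n ∈ (Finset.range b).erase α.val, ((n : ℝ) * (b : ℝ) + (α.val : ℝ)) ^ j))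
          * (m.choose j : ℝ) * V b α (m - j) := by
    intro j _
    rw [← Finset.sum_mul, ← Finset.sum_mul, Finset.sum_add_distrib,
      ← Finset.mul_sum, ← Finset.mul_sum,
      sum_erase_val α (fun n => (n : ℝ) ^ j),
      sum_erase_val α (fun n => ((n : ℝ) * (b : ℝ) + (α.val : ℝ)) ^ j)]
  rw [Finset.sum_congr rfl hj] at h
  rw [Finset.sum_range_succ'] at h
  -- simplify j = 0 term
  have hG0 : (∑ n ∈ (Finset.range b).erase α.val, (n : ℝ) ^ 0) = (b : ℝ) - 1 := by
    simp only [pow_zero]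
    rw [Finset.sum_const, card_range_erase (by omega) α, nsmul_eq_mul, mul_one]
    rw [Nat.cast_sub (by omega)]; norm_num
  have hH0 : (∑ n ∈ (Finset.range b).erase α.val,
      ((n : ℝ) * (b : ℝ) + (α.val : ℝ)) ^ 0) = (b : ℝ) - 1 := by
    simp only [pow_zero]
    rw [Finset.sum_const, card_range_erase (by omega) α, nsmul_eq_mul, mul_one]
    rw [Nat.cast_sub (by omega)]; norm_num
  rw [hG0, hH0, Nat.choose_zero_right, Nat.sub_zero, Nat.cast_one] at h
  -- rewrite the target sum as a range sum
  rw [show Finset.Icc 1 m = Finset.Ico 1 (m + 1) from by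
      rw [Finset.Ico_add_one_right_eq_Icc],
    Finset.sum_Ico_eq_sum_range]
  simp only [Nat.add_sub_cancel] at *
  -- bridge h's sum to the target sum
  have hbridge : (∑ i ∈ Finset.range m,
      (K * (∑ n ∈ (Finset.range b).erase α.val, (n : ℝ) ^ (i + 1))
        + K ^ 2 * (∑ n ∈ (Finset.range b).erase α.val,
            ((n : ℝ) * (b : ℝ) + (α.val : ℝ)) ^ (i + 1)))
        * (m.choose (i + 1) : ℝ) * V b α (m - (i + 1)))
      = K * ∑ i ∈ Finset.range m, (Nat.choose m (1 + i) : ℝ) *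
        ((∑ d ∈ (Finset.range b).erase α.val, (d : ℝ) ^ (1 + i)) +
          K * ∑ d ∈ (Finset.range b).erase α.val, ((d : ℝ) * (b : ℝ) + (α.val : ℝ)) ^ (1 + i)) *
        V b α (m - (1 + i)) := by
    rw [Finset.mul_sum]
    apply Finset.sum_congr rfl
    intro i _
    rw [show 1 + i = i + 1 from by omega]
    ring
  rw [hbridge] at h
  set T : ℝ := ∑ i ∈ Finset.range m, (Nat.choose m (1 + i) : ℝ) *
        ((∑ d ∈ (Finset.range b).erase α.val, (d : ℝ) ^ (1 + i)) +
          K * ∑ d ∈ (Finset.range b).erase α.val, ((d : ℝ) * (b : ℝ) + (α.val : ℝ)) ^ (1 + i)) *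
        V b α (m - (1 + i)) with hT
  linear_combination ((b : ℝ) ^ (m + 1)) * h
    + (((b : ℝ) - 1) * V b α m + ((b : ℝ) - 1) * K * V b α m + T) * hK


end Stmt17Aux



namespace Stmt17Aux

open ENNReal Finset

variable {b : ℕ}

lemma tsum_sub (α : Fin b) (F : List (Fin b) → ℝ≥0∞) :
    ∑' s : {s : List (Fin b) // ¬ [α, α] <:+: s ∧ s.head? ≠ some α}, F s.1 = SP b α F := by
  rw [SP, ← tsum_subtype (PS b α) F]
  rfl

lemma lintegral_sigma (α : Fin b) (f : ℝ → ℝ≥0∞) :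
    ∫⁻ x, f x ∂(sigma b α) =
      ∑' s : {s : List (Fin b) // ¬ [α, α] <:+: s ∧ s.head? ≠ some α},
        wv b s.1 * f (xval b s.1) := by
  rw [sigma, lintegral_sum_measure]
  apply tsum_congr
  intro s
  rw [lintegral_smul_measure, lintegral_dirac]
  rfl

lemma sigma_univ (hb : 2 ≤ b) (α : Fin b) : sigma b α Set.univ = W b α 0 := by
  rw [sigma, Measure.sum_apply _ MeasurableSet.univ]
  have : ∀ s : {s : List (Fin b) // ¬ [α, α] <:+: s ∧ s.head? ≠ some α},
      (((b : ℝ≥0∞) ^ s.1.length)⁻¹ •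
        Measure.dirac ((strVal b s.1 : ℝ) / (b : ℝ) ^ s.1.length)) Set.univ = wv b s.1 := by
    intro s
    rw [Measure.smul_apply, measure_univ, smul_eq_mul, mul_one]
    rfl
  rw [tsum_congr this, tsum_sub α (fun t => wv b t)]
  rw [W]
  apply tsum_congr
  intro t
  by_cases h : t ∈ PS b α <;> simp [Set.indicator_apply, h]

lemma sigma_isFiniteMeasure (hb : 2 ≤ b) (α : Fin b) : IsFiniteMeasure (sigma b α) := by
  constructor
  rw [sigma_univ hb α]
  exact (W_ne_top hb α 0).lt_top

lemma ae_Ico (hb : 2 ≤ b) (α : Fin b) : ∀ᵐ x ∂(sigma b α), x ∈ Set.Ico (0 : ℝ) 1 := by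
  have hb0 : 0 < b := by omega
  rw [MeasureTheory.ae_iff]
  have hms : MeasurableSet {x : ℝ | ¬ x ∈ Set.Ico (0 : ℝ) 1} :=
    (measurableSet_Ico (a := (0:ℝ)) (b := 1)).compl
  rw [sigma, Measure.sum_apply _ hms]
  rw [show (0 : ℝ≥0∞) = ∑' s : {s : List (Fin b) // ¬ [α, α] <:+: s ∧ s.head? ≠ some α},
    (0 : ℝ≥0∞) from by simp]
  apply tsum_congr
  intro s
  rw [Measure.smul_apply, Measure.dirac_apply' _ hms]
  have hx : xval b s.1 ∈ Set.Ico (0 : ℝ) 1 := ⟨xval_nonneg s.1, xval_lt_one hb0 s.1⟩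
  rw [Set.indicator_of_notMem (by simpa [xval] using hx)]
  simp

end Stmt17Aux

namespace Stmt17Aux

open ENNReal Finset MeasureTheory

variable {b : ℕ}

lemma integrable_pow (hb : 2 ≤ b) (α : Fin b) (m : ℕ) :
    Integrable (fun x : ℝ => x ^ m) (sigma b α) := by
  haveI := sigma_isFiniteMeasure hb α
  apply Integrable.mono' (integrable_const (1 : ℝ)) ((continuous_pow m).aestronglyMeasurable)
  filter_upwards [ae_Ico hb α] with x hx
  rw [Real.norm_eq_abs, abs_pow]
  apply pow_le_one₀ (abs_nonneg x)
  rw [abs_le]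
  exact ⟨by linarith [hx.1], le_of_lt hx.2⟩

lemma moment_eq_tsum (hb : 2 ≤ b) (α : Fin b) (m : ℕ) :
    ∫ x, x ^ m ∂(sigma b α) =
      ∑' s : {s : List (Fin b) // ¬ [α, α] <:+: s ∧ s.head? ≠ some α},
        (wv b s.1).toReal * (xval b s.1) ^ m := by
  rw [sigma, integral_sum_measure (by
    rw [show (Measure.sum fun s : {s : List (Fin b) // ¬ [α, α] <:+: s ∧ s.head? ≠ some α} =>
      ((b : ENNReal) ^ s.1.length)⁻¹ •
        Measure.dirac ((strVal b s.1 : ℝ) / (b : ℝ) ^ s.1.length)) = sigma b α from rfl]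
    exact integrable_pow hb α m)]
  apply tsum_congr
  intro s
  rw [integral_smul_measure, integral_dirac, smul_eq_mul]
  rfl

lemma wv_ne_top (hb : 2 ≤ b) (t : List (Fin b)) : wv b t ≠ ∞ := by
  rw [wv]
  exact ENNReal.inv_ne_top.2 (pow_ne_zero _ (by exact_mod_cast by omega : (b : ℝ≥0∞) ≠ 0))

lemma V_eq_tsum (hb : 2 ≤ b) (α : Fin b) (m : ℕ) :
    V b α m = ∑' s : {s : List (Fin b) // ¬ [α, α] <:+: s ∧ s.head? ≠ some α},
      (wv b s.1).toReal * (xval b s.1) ^ m := by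
  rw [V, W, ← tsum_sub α, ENNReal.tsum_toReal_eq
    (f := fun s : {s : List (Fin b) // ¬ [α, α] <:+: s ∧ s.head? ≠ some α} =>
      wv b s.1 * Y b s.1 ^ m)
    (fun s => ENNReal.mul_ne_top (wv_ne_top hb s.1)
      (ENNReal.pow_ne_top ENNReal.ofReal_ne_top))]
  apply tsum_congr
  intro s
  rw [ENNReal.toReal_mul, ENNReal.toReal_pow, Y, ENNReal.toReal_ofReal (xval_nonneg _)]

lemma summable_moment (hb : 2 ≤ b) (α : Fin b) (m : ℕ) :
    Summable (fun s : {s : List (Fin b) // ¬ [α, α] <:+: s ∧ s.head? ≠ some α} =>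
      (wv b s.1).toReal * (xval b s.1) ^ m) := by
  have hfin : (∑' s : {s : List (Fin b) // ¬ [α, α] <:+: s ∧ s.head? ≠ some α},
      wv b s.1 * Y b s.1 ^ m) ≠ ∞ := by
    rw [tsum_sub α (fun t => wv b t * Y b t ^ m)]
    exact W_ne_top hb α m
  apply Summable.congr (ENNReal.summable_toReal hfin)
  intro s
  rw [ENNReal.toReal_mul, ENNReal.toReal_pow, Y, ENNReal.toReal_ofReal (xval_nonneg _)]

lemma exists_s0 (hb : 2 ≤ b) (α : Fin b) :
    ∃ s : {s : List (Fin b) // ¬ [α, α] <:+: s ∧ s.head? ≠ some α},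
      0 < xval b s.1 ∧ xval b s.1 < 1 := by
  have hb0 : 0 < b := by omega
  by_cases hα : α.val = 0
  · refine ⟨⟨[⟨1, by omega⟩], ?_, ?_⟩, ?_, xval_lt_one hb0 _⟩
    · intro hinf
      have := hinf.length_le
      simp at this
    · simp only [List.head?_cons, ne_eq, Option.some.injEq]
      intro h
      have := congrArg Fin.val h
      simp [hα] at this
    · have : strVal b [(⟨1, by omega⟩ : Fin b)] = 1 := by
        simp [strVal]
      rw [xval, this]
      positivity
  · refine ⟨⟨[⟨0, by omega⟩, α], ?_, ?_⟩, ?_, xval_lt_one hb0 _⟩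
    · intro hinf
      have heq : [α, α] = [(⟨0, by omega⟩ : Fin b), α] := hinf.eq_of_length rfl
      obtain ⟨h1, -⟩ := List.cons_eq_cons.mp heq
      exact hα (congrArg Fin.val h1)
    · simp only [List.head?_cons, ne_eq, Option.some.injEq]
      intro h
      exact hα (congrArg Fin.val h).symm
    · have : strVal b [(⟨0, by omega⟩ : Fin b), α] = α.val := by
        simp [strVal]
      rw [xval, this]
      have : 0 < α.val := by omega
      positivity

end Stmt17Aux


theorem stmt_17 (b : ℕ) (hb : 2 ≤ b) (α : Fin b) (u : ℕ → ℝ)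
    (h0 : u 0 = (b : ℝ) ^ 2)
    (hrec : ∀ m : ℕ, 1 ≤ m →
      ((b : ℝ) ^ (m + 1) - (b - 1) - (b - 1) * ((b : ℝ) ^ (m + 1))⁻¹) * u m =
        ∑ j ∈ Finset.Icc 1 m, (Nat.choose m j : ℝ) *
          ((∑ d ∈ (Finset.range b).erase α.val, (d : ℝ) ^ j) +
            ((b : ℝ) ^ (m + 1))⁻¹ *
              ∑ d ∈ (Finset.range b).erase α.val, ((d : ℝ) * b + α.val) ^ j) *
          u (m - j)) :
    (∀ m : ℕ, u m = ∫ x, x ^ m ∂(sigma b α)) ∧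
    (∀ m : ℕ, 0 < u m) ∧ StrictAnti u ∧
    Filter.Tendsto u Filter.atTop (nhds 0) := by
  classical
  have hb0 : 0 < b := by omega
  have hbR : (2 : ℝ) ≤ (b : ℝ) := by exact_mod_cast hb
  -- u agrees with the moment sequence V
  have hu : ∀ m, u m = Stmt17Aux.V b α m := by
    intro m
    induction m using Nat.strong_induction_on with
    | _ m ih =>
      cases m with
      | zero => rw [h0, Stmt17Aux.V_zero hb α]
      | succ n =>
        have hm : 1 ≤ n + 1 := by omega
        have hr := hrec (n + 1) hm
        have hV := Stmt17Aux.Vrec hb α (n + 1) hm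
        have hsum : ∑ j ∈ Finset.Icc 1 (n + 1), (Nat.choose (n + 1) j : ℝ) *
              ((∑ d ∈ (Finset.range b).erase α.val, (d : ℝ) ^ j) +
                ((b : ℝ) ^ (n + 1 + 1))⁻¹ *
                  ∑ d ∈ (Finset.range b).erase α.val, ((d : ℝ) * b + α.val) ^ j) *
              u (n + 1 - j)
            = ∑ j ∈ Finset.Icc 1 (n + 1), (Nat.choose (n + 1) j : ℝ) *
              ((∑ d ∈ (Finset.range b).erase α.val, (d : ℝ) ^ j) +
                ((b : ℝ) ^ (n + 1 + 1))⁻¹ *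
                  ∑ d ∈ (Finset.range b).erase α.val, ((d : ℝ) * b + α.val) ^ j) *
              Stmt17Aux.V b α (n + 1 - j) := by
          apply Finset.sum_congr rfl
          intro j hj
          rw [ih (n + 1 - j) (by
            have := (Finset.mem_Icc.mp hj).1
            omega)]
        rw [hsum, ← hV] at hr
        have hcpos : 0 < (b : ℝ) ^ (n + 1 + 1) - ((b : ℝ) - 1)
            - ((b : ℝ) - 1) * ((b : ℝ) ^ (n + 1 + 1))⁻¹ := by
          have hpow : (b : ℝ) ^ 2 ≤ (b : ℝ) ^ (n + 1 + 1) :=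
            pow_le_pow_right₀ (by linarith) (by omega)
          have hKle : ((b : ℝ) ^ (n + 1 + 1))⁻¹ ≤ 1 := by
            apply inv_le_one_of_one_le₀
            calc (1:ℝ) = 1 ^ (n+1+1) := (one_pow _).symm
            _ ≤ (b : ℝ) ^ (n + 1 + 1) := by gcongr; linarith
          have hKpos : 0 < ((b : ℝ) ^ (n + 1 + 1))⁻¹ := by positivity
          nlinarith [sq_nonneg ((b : ℝ) - 1)]
        exact mul_left_cancel₀ (ne_of_gt hcpos) hr
  have hint : ∀ m, ∫ x, x ^ m ∂(sigma b α) = Stmt17Aux.V b α m := fun m => by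
    rw [Stmt17Aux.moment_eq_tsum hb α m, ← Stmt17Aux.V_eq_tsum hb α m]
  obtain ⟨s0, hs0pos, hs0lt⟩ := Stmt17Aux.exists_s0 hb α
  have hwpos : 0 < (Stmt17Aux.wv b s0.1).toReal :=
    ENNReal.toReal_pos (by
      rw [Stmt17Aux.wv]
      exact ENNReal.inv_ne_zero.2 (ENNReal.pow_ne_top (ENNReal.natCast_ne_top b)))
      (Stmt17Aux.wv_ne_top hb s0.1)
  refine ⟨fun m => by rw [hu m, hint m], ?_, ?_, ?_⟩
  · intro m
    rw [hu m, Stmt17Aux.V_eq_tsum hb α m]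
    apply Summable.tsum_pos (Stmt17Aux.summable_moment hb α m) (fun s => mul_nonneg ENNReal.toReal_nonneg (pow_nonneg (Stmt17Aux.xval_nonneg s.1) m)) s0
    exact mul_pos hwpos (pow_pos hs0pos m)
  · apply strictAnti_nat_of_succ_lt
    intro m
    rw [hu m, hu (m + 1), Stmt17Aux.V_eq_tsum hb α m, Stmt17Aux.V_eq_tsum hb α (m + 1)]
    apply Summable.tsum_lt_tsum (i := s0)
    · intro s
      apply mul_le_mul_of_nonneg_left _ ENNReal.toReal_nonneg
      exact pow_le_pow_of_le_one (Stmt17Aux.xval_nonneg s.1)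
        (le_of_lt (Stmt17Aux.xval_lt_one hb0 s.1)) (by omega)
    · exact mul_lt_mul_of_pos_left
        (pow_lt_pow_right_of_lt_one₀ hs0pos hs0lt (by omega)) hwpos
    · exact Stmt17Aux.summable_moment hb α (m + 1)
    · exact Stmt17Aux.summable_moment hb α m
  · have hfun : u = fun m => ∫ x, x ^ m ∂(sigma b α) := funext fun m => by rw [hu m, hint m]
    rw [hfun]
    haveI := Stmt17Aux.sigma_isFiniteMeasure hb α
    have hDCT := MeasureTheory.tendsto_integral_of_dominated_convergence
      (μ := sigma b α) (F := fun (n : ℕ) (x : ℝ) => x ^ n) (f := fun _ => (0 : ℝ))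
      (bound := fun _ => (1 : ℝ))
      (fun n => (continuous_pow n).aestronglyMeasurable)
      (integrable_const 1)
      (fun n => by
        filter_upwards [Stmt17Aux.ae_Ico hb α] with x hx
        rw [Real.norm_eq_abs, abs_pow]
        apply pow_le_one₀ (abs_nonneg x)
        rw [abs_le]
        exact ⟨by linarith [hx.1], le_of_lt hx.2⟩)
      (by
        filter_upwards [Stmt17Aux.ae_Ico hb α] with x hx
        exact tendsto_pow_atTop_nhds_zero_of_lt_one (by linarith [hx.1]) hx.2)
    simpa using hDCT
end
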